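/- arXiv:2410.23137 — 11 statements merged into one kernel-verified Lean document; each statement's English description precedes it below -/
import Mathlib

section
/- Let π be a strict ranking of m indivisible goods among n agents, and suppose every agent's additive utility function induces π (i.e., agents rank goods identically and strictly). Then an allocation A = (A_1,…,A_n) is SD-EF1 with respect to these utilities if and only if for every agent i and every block index ℓ ∈ {1,…,⌈m/n⌉}, agent i receives at most one good whose rank under π lies in {nℓ−n+1,…,nℓ}. -/
/-!
When all agents share the strict ranking `π`, agent `i` SD-prefers `X` to `Y` exactly when, for
every threshold `t`, `X` holds at least as many of the top `t` goods as `Y`. SD-EF1 therefore says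
that no agent's share of the top `t` goods exceeds another's by more than one, and the block
condition is the statement that all agents take the goods in rounds of `n`.

If every agent has at most one good in each of the first `k` blocks, then, since the top `n * k`
goods are shared out among `n` agents, each of them holds exactly `k` of these goods; letting
every agent drop its best good then gives SD-EF1. Conversely, if some agent holds two goods of the
first bad block `b`, let `t - 1` be the rank of its last good in that block: that agent holds at
least `b + 2` of the top `t` goods, hence by SD-EF1 every agent holds at least `b + 1`, which adds
up to more than `t ≤ n * b + n`.
-/

open Finset

namespace SDEF1

variable {m : ℕ} {M : Type*}

def prefixCount (r : M → Fin m) (S : Finset M) (t : ℕ) : ℕ :=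
  #{x ∈ S | (r x : ℕ) < t}

/-- Ranks and blocks are counted from `0` here: block `b` is the paper's block `ℓ = b + 1`. -/
def blockCount (r : M → Fin m) (n : ℕ) (S : Finset M) (b : ℕ) : ℕ :=
  #{x ∈ S | n * b ≤ (r x : ℕ) ∧ (r x : ℕ) < n * b + n}

section Counting

variable (r : M → Fin m)

lemma prefixCount_mono (S : Finset M) {t t' : ℕ} (h : t ≤ t') :
    prefixCount r S t ≤ prefixCount r S t' :=
  card_le_card (monotone_filter_right S fun _ _ hx => hx.trans_le h)

lemma prefixCount_sub_one_le_erase [DecidableEq M] (S : Finset M) (g : M) (t : ℕ) :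
    prefixCount r S t - 1 ≤ prefixCount r (S.erase g) t := by
  unfold prefixCount
  rw [filter_erase]
  exact pred_card_le_card_erase

lemma prefixCount_erase_of_forall_le [DecidableEq M] {S : Finset M} {g : M} (hg : g ∈ S)
    (hmin : ∀ x ∈ S, (r g : ℕ) ≤ r x) (t : ℕ) :
    prefixCount r (S.erase g) t = prefixCount r S t - 1 := by
  unfold prefixCount
  rw [filter_erase]
  by_cases hgt : (r g : ℕ) < t
  · exact card_erase_of_mem (mem_filter.2 ⟨hg, hgt⟩)
  · have hempty : {x ∈ S | (r x : ℕ) < t} = ∅ :=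
      filter_eq_empty_iff.2 fun x hx hxt => hgt ((hmin x hx).trans_lt hxt)
    simp [hempty]

lemma prefixCount_mul_le {n : ℕ} (hn : 0 < n) {S : Finset M} {k : ℕ}
    (hblock : ∀ b < k, blockCount r n S b ≤ 1) : prefixCount r S (n * k) ≤ k := by
  have hmem : ∀ x : M, n * ((r x : ℕ) / n) ≤ r x ∧ (r x : ℕ) < n * ((r x : ℕ) / n) + n :=
    fun x => ⟨Nat.mul_div_le _ _, by rw [← Nat.mul_succ]; exact Nat.lt_mul_div_succ _ hn⟩
  set s : Finset M := {x ∈ S | (r x : ℕ) < n * k}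
  have hmaps : Set.MapsTo (fun x => (r x : ℕ) / n) s (range k) :=
    fun x hx => mem_range.2 <| (Nat.div_lt_iff_lt_mul hn).2 <| by
      rw [mul_comm]; exact (mem_filter.1 hx).2
  -- Two goods with the same quotient `r x / n` lie in the same block.
  have hinj : Set.InjOn (fun x => (r x : ℕ) / n) s := by
    intro x hx y hy hxy
    have hb := mem_range.1 (hmaps hx)
    refine card_le_one.1 (hblock _ hb) x (mem_filter.2 ⟨(mem_filter.1 hx).1, hmem x⟩) y
      (mem_filter.2 ⟨(mem_filter.1 hy).1, ?_⟩)
    beta_reduce at hxy ⊢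
    rw [hxy]
    exact hmem y
  exact (card_le_card_of_injOn _ hmaps hinj).trans_eq (card_range k)

lemma prefixCount_add_blockCount_le {n b : ℕ} {S : Finset M} {h : M} (hh : n * b ≤ (r h : ℕ))
    (hmax : ∀ x ∈ S, n * b ≤ (r x : ℕ) ∧ (r x : ℕ) < n * b + n → (r x : ℕ) ≤ r h) :
    prefixCount r S (n * b) + blockCount r n S b ≤ prefixCount r S (r h + 1) := by
  classical
  unfold prefixCount blockCount
  rw [← card_union_of_disjoint (disjoint_filter.2 fun _ _ h1 h2 => by omega)]
  refine card_le_card fun x hx => ?_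
  simp only [mem_union, mem_filter] at hx ⊢
  rcases hx with ⟨hxS, hx⟩ | ⟨hxS, hx⟩
  · exact ⟨hxS, by omega⟩
  · exact ⟨hxS, Nat.lt_succ_of_le (hmax x hxS hx)⟩

end Counting

lemma sum_card_filter_of_existsUnique_mem {ι : Type*} [Fintype ι] [Fintype M]
    (A : ι → Finset M) (hpart : ∀ g : M, ∃! i, g ∈ A i) (p : M → Prop) [DecidablePred p] :
    ∑ i, #{x ∈ A i | p x} = #{x | p x} := by
  have hdisj : ((univ : Finset ι) : Set ι).PairwiseDisjoint fun i => {x ∈ A i | p x} :=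
    fun i _ j _ hij => disjoint_left.2 fun g hgi hgj =>
      hij ((hpart g).unique (mem_filter.1 hgi).1 (mem_filter.1 hgj).1)
  rw [← card_disjiUnion _ _ hdisj]
  congr 1
  ext g
  simp only [mem_disjiUnion, mem_univ, true_and, mem_filter]
  obtain ⟨i, hi, -⟩ := hpart g
  exact ⟨fun ⟨_, _, hg⟩ => hg, fun hg => ⟨i, hi, hg⟩⟩

section Allocation

variable [Fintype M] (π : M ≃ Fin m) {n : ℕ} (A : Fin n → Finset M)

lemma sum_prefixCount (hpart : ∀ g : M, ∃! i, g ∈ A i) (t : ℕ) :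
    ∑ j, prefixCount π (A j) t = min m t := by
  unfold prefixCount
  rw [sum_card_filter_of_existsUnique_mem A hpart, ← Fin.card_filter_val_lt]
  exact card_equiv π (by simp)

lemma prefixCount_mul_eq (hn : 0 < n) (hpart : ∀ g : M, ∃! i, g ∈ A i) {k : ℕ} (hk : n * k ≤ m)
    (hblock : ∀ j, ∀ b < k, blockCount π n (A j) b ≤ 1) (j : Fin n) :
    prefixCount π (A j) (n * k) = k := by
  have hle : ∀ j ∈ univ, prefixCount π (A j) (n * k) ≤ k :=
    fun j _ => prefixCount_mul_le π hn (hblock j)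
  have hsum : ∑ j, prefixCount π (A j) (n * k) = ∑ _j : Fin n, k := by
    simp [sum_prefixCount π A hpart, hk]
  exact (sum_eq_sum_iff_of_le hle).1 hsum j (mem_univ j)

variable [DecidableEq M]

/-- SD-EF1 for utilities that all induce the ranking `π`, in terms of prefix counts. -/
def PrefixEF1 : Prop :=
  ∀ i j, A j = ∅ ∨ ∃ g ∈ A j, ∀ h : M,
    prefixCount π ((A j).erase g) (π h + 1) ≤ prefixCount π (A i) (π h + 1)

lemma prefixEF1_of_blockCount_le_one (hn : 0 < n) (hpart : ∀ g : M, ∃! i, g ∈ A i)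
    (hblock : ∀ i b, blockCount π n (A i) b ≤ 1) : PrefixEF1 π A := by
  intro i j
  rcases (A j).eq_empty_or_nonempty with hA | hA
  · exact Or.inl hA
  obtain ⟨g, hg, hmin⟩ := exists_min_image (A j) (fun x => (π x : ℕ)) hA
  refine Or.inr ⟨g, hg, fun h => ?_⟩
  set k := (π h : ℕ) / n
  have hlo : n * k ≤ π h := Nat.mul_div_le _ _
  have hhi : (π h : ℕ) < n * (k + 1) := Nat.lt_mul_div_succ _ hn
  have hi : k ≤ prefixCount π (A i) (π h + 1) :=
    calc k = prefixCount π (A i) (n * k) :=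
          (prefixCount_mul_eq π A hn hpart (by omega) (fun j b _ => hblock j b) i).symm
      _ ≤ prefixCount π (A i) (π h + 1) := prefixCount_mono π _ (by omega)
  have hj : prefixCount π (A j) (π h + 1) ≤ k + 1 :=
    calc prefixCount π (A j) (π h + 1) ≤ prefixCount π (A j) (n * (k + 1)) :=
          prefixCount_mono π _ hhi
      _ ≤ k + 1 := prefixCount_mul_le π hn fun b _ => hblock j b
  rw [prefixCount_erase_of_forall_le π hg hmin]
  omega

lemma blockCount_le_one_of_prefixEF1 (hn : 0 < n) (hpart : ∀ g : M, ∃! i, g ∈ A i)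
    (hEF : PrefixEF1 π A) (i : Fin n) (b : ℕ) : blockCount π n (A i) b ≤ 1 := by
  induction b using Nat.strong_induction_on generalizing i with
  | _ b ih =>
  by_contra hcard
  set B := {x ∈ A i | n * b ≤ (π x : ℕ) ∧ (π x : ℕ) < n * b + n}
  obtain ⟨h, hhB, hmax⟩ := exists_max_image B (fun x => (π x : ℕ))
    (card_pos.1 (by have : 1 < #B := not_le.1 hcard; omega))
  obtain ⟨hhA, hhlo, hhhi⟩ := mem_filter.1 hhB
  have hfull : prefixCount π (A i) (n * b) = b :=
    prefixCount_mul_eq π A hn hpart (by omega) (fun j b' hb' => ih b' hb' j) i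
  have hi : b + 2 ≤ prefixCount π (A i) (π h + 1) := by
    have := prefixCount_add_blockCount_le π hhlo fun x hx hxB => hmax x (mem_filter.2 ⟨hx, hxB⟩)
    have := not_le.1 hcard
    omega
  have hj : ∀ j, b + 1 ≤ prefixCount π (A j) (π h + 1) := by
    intro j
    obtain ⟨g, -, hg⟩ := (hEF j i).resolve_left (ne_empty_of_mem hhA)
    have := prefixCount_sub_one_le_erase π (A i) g (π h + 1)
    have : prefixCount π ((A i).erase g) (π h + 1) ≤ prefixCount π (A j) (π h + 1) := hg h
    omega
  have hlt : ∑ _j : Fin n, (b + 1) < ∑ j, prefixCount π (A j) (π h + 1) :=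
    sum_lt_sum (fun j _ => hj j) ⟨i, mem_univ i, by omega⟩
  rw [sum_const, card_univ, Fintype.card_fin, smul_eq_mul, sum_prefixCount π A hpart] at hlt
  rw [Nat.mul_succ] at hlt
  omega

end Allocation

lemma card_filter_utility_le_eq_prefixCount {α : Type*} [LinearOrder α] (π : M ≃ Fin m)
    (u : M → α) (hind : ∀ g g' : M, (π g : ℕ) < π g' ↔ u g' < u g) (S : Finset M) (h : M) :
    #{x ∈ S | u h ≤ u x} = prefixCount π S (π h + 1) :=
  congrArg card <| filter_congr fun x _ => by
    rw [Nat.lt_succ_iff, ← not_lt, ← not_lt, hind]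

lemma forall_Icc_card_filter_le_one_iff {n : ℕ} (hn : 0 < n) (r : M → Fin m) (S : Finset M) :
    (∀ ℓ ∈ Icc 1 ((m + n - 1) / n),
        #{g ∈ S | n * ℓ - n + 1 ≤ (r g : ℕ) + 1 ∧ (r g : ℕ) + 1 ≤ n * ℓ} ≤ 1) ↔
      ∀ b, blockCount r n S b ≤ 1 := by
  have hshift : ∀ b, {g ∈ S | n * (b + 1) - n + 1 ≤ (r g : ℕ) + 1 ∧ (r g : ℕ) + 1 ≤ n * (b + 1)}
      = {x ∈ S | n * b ≤ (r x : ℕ) ∧ (r x : ℕ) < n * b + n} :=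
    fun b => filter_congr fun x _ => by rw [Nat.mul_succ]; omega
  have hIcc : ∀ b, b + 1 ∈ Icc 1 ((m + n - 1) / n) ↔ n * b < m := fun b => by
    rw [mem_Icc, Nat.le_div_iff_mul_le hn, Nat.succ_mul, Nat.mul_comm b n]
    omega
  constructor
  · intro H b
    by_cases hb : n * b < m
    · rw [blockCount, ← hshift]
      exact H (b + 1) ((hIcc b).2 hb)
    · have hempty : {x ∈ S | n * b ≤ (r x : ℕ) ∧ (r x : ℕ) < n * b + n} = ∅ :=
        filter_eq_empty_iff.2 fun x _ hx => by have := (r x).isLt; omega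
      simp [blockCount, hempty]
  · intro H ℓ hℓ
    obtain ⟨b, rfl⟩ : ∃ b, ℓ = b + 1 := ⟨ℓ - 1, by have := (mem_Icc.1 hℓ).1; omega⟩
    rw [hshift]
    exact H b

end SDEF1

open SDEF1

/-- An allocation of indivisible goods among `n` agents whose additive utilities
all induce a common strict ranking `π` is SD-EF1 with respect to these
utilities iff every agent receives at most one good from each consecutive
block of `n` goods of the ranking. -/
theorem stmt_0 {n m : ℕ} (hn : 0 < n) {M : Type*} [Fintype M] [DecidableEq M]
    (π : M ≃ Fin m) (u : Fin n → M → ℝ)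
    (hind : ∀ i (g g' : M), (π g : ℕ) < (π g' : ℕ) ↔ u i g' < u i g)
    (A : Fin n → Finset M)
    (hpart : ∀ g : M, ∃! i, g ∈ A i) :
    (∀ i j, A j = ∅ ∨ ∃ g ∈ A j, ∀ h : M,
        (((A j).erase g).filter (fun x => u i h ≤ u i x)).card ≤
          ((A i).filter (fun x => u i h ≤ u i x)).card)
    ↔ (∀ i, ∀ ℓ ∈ Finset.Icc 1 ((m + n - 1) / n),
        ((A i).filter (fun g =>
          n * ℓ - n + 1 ≤ (π g : ℕ) + 1 ∧ (π g : ℕ) + 1 ≤ n * ℓ)).card ≤ 1) := by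
  have hcount : ∀ i S h, #{x ∈ S | u i h ≤ u i x} = prefixCount π S (π h + 1) :=
    fun i => card_filter_utility_le_eq_prefixCount π (u i) (hind i)
  simp only [hcount, forall_Icc_card_filter_le_one_iff hn]
  exact ⟨blockCount_le_one_of_prefixEF1 π A hn hpart, prefixEF1_of_blockCount_le_one π A hn hpart⟩
end

section
/- If every agent's additive utility u'_i is consistent with a strict ranking π over the goods (π(g) ≤ π(g') implies u'_i(g) ≥ u'_i(g')), then any allocation in which each agent receives at most one good from each consecutive block of n goods of π (blocks {nℓ−n+1,…,nℓ} for ℓ = 1,…,⌈m/n⌉) is SD-EF1 with respect to the profile (u'_i). -/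
open Finset

/-!
Number the blocks from `0`, so that the good `g` lies in block `π g / n`. The block condition
says that an agent owns at most one good per block, and since the `n` goods of a full block go
to `n` pairwise distinct agents, every agent owns exactly one good of each full block. Let `g` be
the best good of `A j` for the common ranking. Every other good `x` of `A j` lies in a block
`b ≥ 1`, and we send it to the good of agent `i` in block `b - 1`, which agent `i` weakly prefers
to `x`. This map is injective, so it matches the goods of `A j \ {g}` above any threshold with
goods of `A i` above the same threshold.
-/

section BlockAllocation

variable {n m : ℕ} {M : Type*} (π : M ≃ Fin m) (A : Fin n → Finset M)

lemma injOn_div_of_card_filter_block_le_one (hn : 0 < n)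
    (hblock : ∀ i, ∀ ℓ ∈ Finset.Icc 1 ((m + n - 1) / n),
        ((A i).filter (fun g =>
          n * ℓ - n + 1 ≤ (π g : ℕ) + 1 ∧ (π g : ℕ) + 1 ≤ n * ℓ)).card ≤ 1)
    (i : Fin n) : Set.InjOn (fun g => (π g : ℕ) / n) (A i) := by
  intro x hx y hy hxy
  obtain ⟨q, hxq⟩ : ∃ q, (π x : ℕ) / n = q := ⟨_, rfl⟩
  have hblock_of_div : ∀ g, (π g : ℕ) / n = q →
      n * (q + 1) - n + 1 ≤ (π g : ℕ) + 1 ∧ (π g : ℕ) + 1 ≤ n * (q + 1) := by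
    intro g hg
    have := (Nat.div_eq_iff hn).mp hg
    rw [Nat.mul_succ, Nat.mul_comm]
    omega
  have hq : q + 1 ∈ Icc 1 ((m + n - 1) / n) := by
    have := (Nat.div_eq_iff hn).mp hxq
    have := (π x).isLt
    rw [mem_Icc, Nat.le_div_iff_mul_le hn, Nat.succ_mul]
    omega
  exact card_le_one.mp (hblock i (q + 1) hq) x (mem_filter.mpr ⟨hx, hblock_of_div x hxq⟩)
    y (mem_filter.mpr ⟨hy, hblock_of_div y (hxy.symm.trans hxq)⟩)

variable {π A}

lemma exists_mem_div_eq (hpart : ∀ g : M, ∃! i, g ∈ A i)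
    (hinj : ∀ i, Set.InjOn (fun g => (π g : ℕ) / n) (A i))
    {k : ℕ} (hk : n * (k + 1) ≤ m) (a : Fin n) : ∃ e ∈ A a, (π e : ℕ) / n = k := by
  choose owner howner using fun g => (hpart g).exists
  have hlt : ∀ r : Fin n, n * k + r < m := fun r => by
    have := r.isLt
    rw [Nat.mul_succ] at hk
    omega
  let good : Fin n → M := fun r => π.symm ⟨n * k + r, hlt r⟩
  have hdiv : ∀ r, (π (good r) : ℕ) / n = k := fun r => by
    simp only [good, Equiv.apply_symm_apply]
    rw [Nat.mul_add_div r.pos, Nat.div_eq_of_lt r.isLt, add_zero]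
  have hinj_owner : Function.Injective (owner ∘ good) := by
    intro r s (hrs : owner (good r) = owner (good s))
    have hgood : good r = good s := hinj (owner (good r)) (howner (good r))
      (hrs ▸ howner (good s)) ((hdiv r).trans (hdiv s).symm)
    simpa [good, Fin.ext_iff] using hgood
  obtain ⟨r, hr⟩ := Finite.injective_iff_surjective.mp hinj_owner a
  exact ⟨good r, hr ▸ howner (good r), hdiv r⟩

lemma card_filter_erase_le_card_filter (hpart : ∀ g : M, ∃! i, g ∈ A i)
    (hinj : ∀ i, Set.InjOn (fun g => (π g : ℕ) / n) (A i)) [DecidableEq M] (i j : Fin n)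
    {g : M} (hg : g ∈ A j) (hgmin : ∀ x ∈ A j, (π g : ℕ) ≤ π x)
    (P : M → Prop) [DecidablePred P] (hP : ∀ x e, P x → (π e : ℕ) ≤ π x → P e) :
    (((A j).erase g).filter P).card ≤ ((A i).filter P).card := by
  have hn : 0 < n := i.pos
  have hdiv_pos : ∀ x ∈ (A j).erase g, 0 < (π x : ℕ) / n := by
    intro x hx
    obtain ⟨hxg, hxj⟩ := mem_erase.mp hx
    refine Nat.pos_of_ne_zero fun hx0 => hxg (hinj j hxj hg ?_)
    have hgx := Nat.div_le_div_right (c := n) (hgmin x hxj)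
    simp only at hx0 ⊢
    rw [hx0] at hgx ⊢
    exact (Nat.le_zero.mp hgx).symm
  have hrep : ∀ x ∈ ((A j).erase g).filter P,
      ∃ e ∈ (A i).filter P, (π e : ℕ) / n = (π x : ℕ) / n - 1 := by
    intro x hx
    obtain ⟨hxA, hPx⟩ := mem_filter.mp hx
    have hbound : n * ((π x : ℕ) / n - 1 + 1) ≤ m := by
      rw [Nat.sub_add_cancel (hdiv_pos x hxA)]
      exact (Nat.mul_div_le _ n).trans (π x).isLt.le
    obtain ⟨e, he, hek⟩ := exists_mem_div_eq hpart hinj hbound i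
    have hex : (π e : ℕ) < π x :=
      Nat.lt_of_div_lt_div (c := n) (by have := hdiv_pos x hxA; omega)
    exact ⟨e, mem_filter.mpr ⟨he, hP x e hPx hex.le⟩, hek⟩
  choose! f hfP hfdiv using hrep
  refine card_le_card_of_injOn f (fun x hx => hfP x hx) fun x hx y hy hxy => ?_
  have hx' := (mem_filter.mp hx).1
  have hy' := (mem_filter.mp hy).1
  have hpred : (π x : ℕ) / n - 1 = (π y : ℕ) / n - 1 := by
    rw [← hfdiv x hx, ← hfdiv y hy, hxy]
  have := hdiv_pos x hx'
  have := hdiv_pos y hy'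
  exact hinj j (mem_of_mem_erase hx') (mem_of_mem_erase hy') (by simp only; omega)

end BlockAllocation

theorem stmt_1_general {n m : ℕ} {M : Type*} [DecidableEq M]
    (π : M ≃ Fin m) (u : Fin n → M → ℝ)
    (hcons : ∀ i (g g' : M), (π g : ℕ) ≤ (π g' : ℕ) → u i g' ≤ u i g)
    (A : Fin n → Finset M)
    (hpart : ∀ g : M, ∃! i, g ∈ A i)
    (hblock : ∀ i, ∀ ℓ ∈ Finset.Icc 1 ((m + n - 1) / n),
        ((A i).filter (fun g =>
          n * ℓ - n + 1 ≤ (π g : ℕ) + 1 ∧ (π g : ℕ) + 1 ≤ n * ℓ)).card ≤ 1) :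
    ∀ i j, A j = ∅ ∨ ∃ g ∈ A j, ∀ h : M,
        (((A j).erase g).filter (fun x => u i h ≤ u i x)).card ≤
          ((A i).filter (fun x => u i h ≤ u i x)).card := by
  intro i j
  rcases (A j).eq_empty_or_nonempty with hAj | hAj
  · exact Or.inl hAj
  obtain ⟨g, hg, hgmin⟩ := (A j).exists_min_image (fun x => (π x : ℕ)) hAj
  have hinj := injOn_div_of_card_filter_block_le_one π A i.pos hblock
  exact Or.inr ⟨g, hg, fun h => card_filter_erase_le_card_filter hpart hinj i j hg hgmin _
    fun x e hx hle => hx.trans (hcons i e x hle)⟩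

/-- If every agent's additive utility is consistent with a strict ranking `π`,
then any allocation giving each agent at most one good from each consecutive
block of `n` goods of `π` is SD-EF1 with respect to the profile. -/
theorem stmt_1 {n m : ℕ} (hn : 0 < n) {M : Type*} [Fintype M] [DecidableEq M]
    (π : M ≃ Fin m) (u : Fin n → M → ℝ)
    (hcons : ∀ i (g g' : M), (π g : ℕ) ≤ (π g' : ℕ) → u i g' ≤ u i g)
    (A : Fin n → Finset M)
    (hpart : ∀ g : M, ∃! i, g ∈ A i)
    (hblock : ∀ i, ∀ ℓ ∈ Finset.Icc 1 ((m + n - 1) / n),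
        ((A i).filter (fun g =>
          n * ℓ - n + 1 ≤ (π g : ℕ) + 1 ∧ (π g : ℕ) + 1 ≤ n * ℓ)).card ≤ 1) :
    ∀ i j, A j = ∅ ∨ ∃ g ∈ A j, ∀ h : M,
        (((A j).erase g).filter (fun x => u i h ≤ u i x)).card ≤
          ((A i).filter (fun x => u i h ≤ u i x)).card :=
  stmt_1_general π u hcons A hpart hblock
end

section
/- There exists an instance with 2 agents and 7 indivisible goods, with additive subjective utilities for the two agents and an additive market valuation, in which no allocation of the goods is simultaneously SD-EF1 with respect to both agents' subjective utilities and SD-EF1 with respect to the market valuation. In particular, this holds whenever the market valuation induces the strict ranking g1≻g2≻g3≻g4≻g5≻g6≻g7, agent 1's utility induces g1≻g3≻g2≻g5≻g4≻g7≻g6, and agent 2's utility induces g1≻g5≻g2≻g3≻g6≻g7≻g4. -/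
/-! SD-EF1 only compares bundles good by good through the induced ranking, so it is a property
of the rankings, not of the numerical values. For the three fixed rankings the claim is then a
finite check over the `2 ^ 7` bundles of agent 1, which the kernel carries out. -/

open Finset

/-- `sdPair w X Y` : bundle `X` stochastically dominates `Y` minus some good,
under valuation `w` (the SD-EF1 condition for one ordered pair of agents). -/
def sdPair {M : Type*} [Fintype M] [DecidableEq M] (w : M → ℝ) (X Y : Finset M) : Prop :=
  Y = ∅ ∨ ∃ g ∈ Y, ∀ h : M,
    ((Y.erase g).filter (fun x => w h ≤ w x)).card ≤ (X.filter (fun x => w h ≤ w x)).card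

/-- ranking of agent 1 : g1 ≻ g3 ≻ g2 ≻ g5 ≻ g4 ≻ g7 ≻ g6 (0-indexed ranks). -/
def rk1 : Fin 7 → ℕ := ![0, 2, 1, 4, 3, 6, 5]

/-- ranking of agent 2 : g1 ≻ g5 ≻ g2 ≻ g3 ≻ g6 ≻ g7 ≻ g4 (0-indexed ranks). -/
def rk2 : Fin 7 → ℕ := ![0, 2, 3, 6, 1, 4, 5]

/-- `sdPair` for the ranking `rk`, where a smaller rank is a better good. -/
def sdPairRank {M : Type*} [DecidableEq M] (rk : M → ℕ) (X Y : Finset M) : Prop :=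
  Y = ∅ ∨ ∃ g ∈ Y, ∀ h : M,
    ((Y.erase g).filter (fun x => rk x ≤ rk h)).card ≤ (X.filter (fun x => rk x ≤ rk h)).card

instance {M : Type*} [Fintype M] [DecidableEq M] (rk : M → ℕ) (X Y : Finset M) :
    Decidable (sdPairRank rk X Y) := by
  unfold sdPairRank; infer_instance

theorem sdPair_iff_sdPairRank {M : Type*} [Fintype M] [DecidableEq M] {w : M → ℝ} {rk : M → ℕ}
    (h : ∀ g g', rk g < rk g' ↔ w g' < w g) (X Y : Finset M) :
    sdPair w X Y ↔ sdPairRank rk X Y := by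
  have hle : ∀ x y, w y ≤ w x ↔ rk x ≤ rk y := fun x y => by
    rw [← not_lt, ← not_lt, h]
  simp only [sdPair, sdPairRank, hle]

set_option maxRecDepth 10000 in
theorem not_sdPairRank_rk1_rk2_val : ∀ A : Finset (Fin 7),
    ¬ (sdPairRank rk1 A Aᶜ ∧ sdPairRank rk2 Aᶜ A ∧
      sdPairRank Fin.val A Aᶜ ∧ sdPairRank Fin.val Aᶜ A) := by
  decide

theorem stmt_2_general (u₁ u₂ v : Fin 7 → ℝ)
    (h₁ : ∀ g g', rk1 g < rk1 g' ↔ u₁ g' < u₁ g)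
    (h₂ : ∀ g g', rk2 g < rk2 g' ↔ u₂ g' < u₂ g)
    (hv : ∀ g g' : Fin 7, (g : ℕ) < (g' : ℕ) ↔ v g' < v g)
    (A₁ A₂ : Finset (Fin 7)) (hdisj : Disjoint A₁ A₂) (hcover : A₁ ∪ A₂ = Finset.univ) :
    ¬ (sdPair u₁ A₁ A₂ ∧ sdPair u₂ A₂ A₁ ∧ sdPair v A₁ A₂ ∧ sdPair v A₂ A₁) := by
  obtain rfl : A₂ = A₁ᶜ := (IsCompl.compl_eq ⟨hdisj, codisjoint_iff.mpr hcover⟩).symm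
  rw [sdPair_iff_sdPairRank h₁, sdPair_iff_sdPairRank h₂, sdPair_iff_sdPairRank (rk := Fin.val) hv,
    sdPair_iff_sdPairRank (rk := Fin.val) hv]
  exact not_sdPairRank_rk1_rk2_val A₁

/-- With 2 agents and 7 goods whose market values induce the ranking
g1 ≻ ⋯ ≻ g7 and whose subjective utilities induce the rankings `rk1`, `rk2`,
no allocation is SD-EF1 w.r.t. both the subjective utilities and the market
valuation. -/
theorem stmt_2 (u₁ u₂ v : Fin 7 → ℝ)
    (hnn₁ : ∀ g, 0 ≤ u₁ g) (hnn₂ : ∀ g, 0 ≤ u₂ g) (hnnv : ∀ g, 0 ≤ v g)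
    (h₁ : ∀ g g', rk1 g < rk1 g' ↔ u₁ g' < u₁ g)
    (h₂ : ∀ g g', rk2 g < rk2 g' ↔ u₂ g' < u₂ g)
    (hv : ∀ g g' : Fin 7, (g : ℕ) < (g' : ℕ) ↔ v g' < v g)
    (A₁ A₂ : Finset (Fin 7)) (hdisj : Disjoint A₁ A₂) (hcover : A₁ ∪ A₂ = Finset.univ) :
    ¬ (sdPair u₁ A₁ A₂ ∧ sdPair u₂ A₂ A₁ ∧ sdPair v A₁ A₂ ∧ sdPair v A₂ A₁) :=
  stmt_2_general u₁ u₂ v h₁ h₂ hv A₁ A₂ hdisj hcover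
end

section
/- If all n agents' additive subjective utilities induce the same ranking over the m goods, then there always exists an allocation that is SD-EF1 with respect to all subjective utilities and SD-EF1 with respect to the additive market valuation. (The proof proceeds by decomposing an n-regular bipartite multigraph, whose edges are labeled by goods and whose vertices correspond to consecutive rank-blocks under the two rankings, into n perfect matchings.) -/
open Finset

/-!
Rank the goods once by the common subjective order and once by market value, and cut each
ranking into consecutive blocks of `n` goods. Every good is an edge of a bipartite multigraph
joining its two blocks; padded with dummy goods ranked last, this multigraph is `n`-regular,
so by Hall's theorem it splits into `n` perfect matchings; agent `i` receives the `i`-th one.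
A bundle then holds at most one good of each block of either ranking and one good of each full
block, so among the top `k` goods of either ranking every bundle holds `⌊k/n⌋` or `⌊k/n⌋ + 1`
of them; removing the best good of the envied bundle gives SD-EF1.
-/

open Function

lemma injOn_prod_ite {E β : Type*} [DecidableEq E] {f : E → β} {S T : Finset E} {n : ℕ}
    {a : E → ℕ}
    (hSf : Set.InjOn f S) (ha : ∀ x ∈ T \ S, a x < n)
    (hinj : Set.InjOn (fun x => (a x, f x)) ↑(T \ S)) :
    Set.InjOn (fun x => (if x ∈ S then n else a x, f x)) T := by
  intro x hx y hy hxy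
  obtain ⟨hxy₁, hxy₂⟩ := Prod.mk.inj hxy
  have hS (z) (hz : z ∈ (T : Set E)) (hzS : z ∉ S) : z ∈ (↑(T \ S) : Set E) := by
    simpa [hzS] using hz
  by_cases hxS : x ∈ S <;> by_cases hyS : y ∈ S <;>
    simp only [hxS, hyS, if_true, if_false] at hxy₁
  · exact hSf hxS hyS hxy₂
  · exact absurd hxy₁ (ha y (hS y hy hyS)).ne'
  · exact absurd hxy₁ (ha x (hS x hx hxS)).ne
  · exact hinj (hS x hx hxS) (hS y hy hyS) (Prod.ext hxy₁ hxy₂)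

section RegularBipartite

variable {E β γ : Type*} [DecidableEq β] [DecidableEq γ]

/-- Edge `x ∈ T` has endpoint `f x`; every endpoint that occurs has degree `n`. -/
def IsFiberRegular (T : Finset E) (f : E → β) (n : ℕ) : Prop :=
  ∀ x ∈ T, #{y ∈ T | f y = f x} = n

variable {T : Finset E} {n : ℕ}

lemma IsFiberRegular.card_filter_mem {f : E → β} (hf : IsFiberRegular T f n) {U : Finset β}
    (hU : U ⊆ T.image f) : #{x ∈ T | f x ∈ U} = n * #U := by
  rw [card_eq_sum_card_fiberwise (s := {x ∈ T | f x ∈ U}) (t := U)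
    fun x hx => mem_coe.2 (mem_filter.1 hx).2, mul_comm]
  refine sum_const_nat fun b hb => ?_
  obtain ⟨x, hx, rfl⟩ := mem_image.1 (hU hb)
  rw [filter_filter, ← hf x hx]
  exact congrArg card (filter_congr fun y _ => and_iff_right_of_imp fun h => h ▸ hb)

lemma IsFiberRegular.card_eq {f : E → β} (hf : IsFiberRegular T f n) :
    #T = n * #(T.image f) := by
  rw [← hf.card_filter_mem subset_rfl, filter_true_of_mem fun x hx => mem_image_of_mem f hx]

lemma IsFiberRegular.card_le_mul_card_image {f : E → β} (hf : IsFiberRegular T f n)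
    {F : Finset E} (hF : F ⊆ T) : #F ≤ n * #(F.image f) :=
  Finset.card_le_mul_card_image F n fun b hb => by
    obtain ⟨x, hx, rfl⟩ := mem_image.1 hb
    exact hf x (hF hx) ▸ card_le_card (filter_subset_filter _ hF)

/-- A regular bipartite multigraph has a perfect matching (Hall's theorem). -/
theorem IsFiberRegular.exists_perfect_matching {f : E → β} {g : E → γ} (hn : 0 < n)
    (hf : IsFiberRegular T f n) (hg : IsFiberRegular T g n) :
    ∃ S ⊆ T, Set.InjOn f S ∧ Set.InjOn g S ∧
      S.image f = T.image f ∧ S.image g = T.image g := by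
  classical
  let t : T.image f → Finset γ := fun l => {x ∈ T | f x = l}.image g
  have hall (s : Finset (T.image f)) : #s ≤ #(s.biUnion t) := by
    let F := {x ∈ T | f x ∈ s.image Subtype.val}
    have hFg : F.image g ⊆ s.biUnion t := by
      intro c hc
      simp only [F, t, mem_image, mem_filter, mem_biUnion] at hc ⊢
      obtain ⟨x, ⟨hxT, l, hls, hlx⟩, rfl⟩ := hc
      exact ⟨l, hls, x, ⟨hxT, hlx.symm⟩, rfl⟩
    have : n * #s ≤ n * #(s.biUnion t) := calc
      n * #s = #F := by
        rw [hf.card_filter_mem (image_subset_iff.2 fun l _ => l.2),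
          card_image_of_injective _ Subtype.val_injective]
      _ ≤ n * #(F.image g) := hg.card_le_mul_card_image (filter_subset _ _)
      _ ≤ n * #(s.biUnion t) := by gcongr
    exact Nat.le_of_mul_le_mul_left this hn
  obtain ⟨ψ, hψ, hψt⟩ := (all_card_le_biUnion_card_iff_exists_injective t).1 hall
  choose χ hχ using fun l => mem_image.1 (hψt l)
  have hχT l : χ l ∈ T := (mem_filter.1 (hχ l).1).1
  have hχf l : f (χ l) = l := (mem_filter.1 (hχ l).1).2
  have hχg l : g (χ l) = ψ l := (hχ l).2
  have hf_image : (univ.image χ).image f = T.image f := by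
    rw [image_image, show f ∘ χ = Subtype.val from funext hχf, univ_eq_attach, attach_image_val]
  have hg_image : (univ.image χ).image g = univ.image ψ := by
    rw [image_image, show g ∘ χ = ψ from funext hχg]
  refine ⟨univ.image χ, image_subset_iff.2 fun l _ => hχT l, ?_, ?_, hf_image, ?_⟩
  · simp only [coe_image, coe_univ, Set.image_univ]
    rintro _ ⟨l, rfl⟩ _ ⟨l', rfl⟩ h
    exact congrArg χ (Subtype.ext ((hχf l).symm.trans (h.trans (hχf l'))))
  · simp only [coe_image, coe_univ, Set.image_univ]
    rintro _ ⟨l, rfl⟩ _ ⟨l', rfl⟩ h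
    exact congrArg χ (hψ ((hχg l).symm.trans (h.trans (hχg l'))))
  · -- both sides of the graph have `#T / n` vertices, so the injective `ψ` hits every one
    rw [hg_image]
    refine eq_of_subset_of_card_le (image_subset_iff.2 fun l _ => ?_) ?_
    · exact hχg l ▸ mem_image_of_mem g (hχT l)
    · rw [card_image_of_injective _ hψ, card_univ, Fintype.card_coe]
      exact (Nat.eq_of_mul_eq_mul_left hn (hg.card_eq.symm.trans hf.card_eq)).le

lemma IsFiberRegular.sdiff [DecidableEq E] {f : E → β} (hf : IsFiberRegular T f (n + 1))
    {S : Finset E} (hST : S ⊆ T) (hSf : Set.InjOn f S) (hS : S.image f = T.image f) :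
    IsFiberRegular (T \ S) f n := by
  intro x hx
  have hxT := (mem_sdiff.1 hx).1
  obtain ⟨y, hyS, hyx⟩ := mem_image.1 (hS ▸ mem_image_of_mem f hxT)
  have hS_fiber : {z ∈ S | f z = f x} = {y} := by
    ext z
    simp only [mem_filter, mem_singleton]
    exact ⟨fun ⟨hz, hzx⟩ => hSf hz hyS (hzx.trans hyx.symm), fun h => h ▸ ⟨hyS, hyx⟩⟩
  have hsplit : {z ∈ T \ S | f z = f x} = {z ∈ T | f z = f x} \ {z ∈ S | f z = f x} := by
    ext z
    simp only [mem_filter, mem_sdiff]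
    tauto
  rw [hsplit, card_sdiff_of_subset (filter_subset_filter _ hST), hf x hxT, hS_fiber,
    card_singleton, Nat.add_sub_cancel]

/-- König's edge-colouring theorem for regular bipartite multigraphs. -/
theorem IsFiberRegular.exists_coloring {f : E → β} {g : E → γ} :
    ∀ {n : ℕ} {T : Finset E}, IsFiberRegular T f n → IsFiberRegular T g n →
      ∃ a : E → ℕ, (∀ x ∈ T, a x < n) ∧
        Set.InjOn (fun x => (a x, f x)) T ∧ Set.InjOn (fun x => (a x, g x)) T
  | 0, T, hf, _ => by
    obtain rfl : T = ∅ := eq_empty_of_forall_notMem fun x hx => by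
      have hx_fiber := hf x hx
      rw [card_eq_zero, filter_eq_empty_iff] at hx_fiber
      exact hx_fiber hx rfl
    exact ⟨fun _ => 0, by simp, by simp, by simp⟩
  | n + 1, T, hf, hg => by
    classical
    obtain ⟨S, hST, hSf, hSg, hSf_image, hSg_image⟩ := hf.exists_perfect_matching n.succ_pos hg
    obtain ⟨a, ha, haf, hag⟩ :=
      (hf.sdiff hST hSf hSf_image).exists_coloring (hg.sdiff hST hSg hSg_image)
    refine ⟨fun x => if x ∈ S then n else a x, fun x hx => ?_,
      injOn_prod_ite hSf ha haf, injOn_prod_ite hSg ha hag⟩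
    dsimp only
    split_ifs with hxS
    · exact n.lt_succ_self
    · exact (ha x (mem_sdiff.2 ⟨hx, hxS⟩)).trans n.lt_succ_self

end RegularBipartite

section Blocks

variable {α : Type*} [Fintype α] {N n : ℕ}

lemma card_filter_div_eq (r : α ≃ Fin N) (hn : 0 < n) {b : ℕ} (hb : (b + 1) * n ≤ N) :
    #{x | (r x : ℕ) / n = b} = n := by
  rw [add_one_mul] at hb
  calc #{x | (r x : ℕ) / n = b} = #(Ico (b * n) (b * n + n)) := by
        refine card_nbij (fun x => (r x : ℕ)) (fun x hx => ?_)
          (fun x _ y _ h => r.injective (Fin.ext h)) (fun t ht => ?_)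
        · simp only [mem_coe, mem_filter, Nat.div_eq_iff hn, mem_univ, true_and] at hx
          simp only [coe_Ico, Set.mem_Ico]
          omega
        · simp only [coe_Ico, Set.mem_Ico] at ht
          refine ⟨r.symm ⟨t, by omega⟩, ?_, by simp⟩
          simp only [mem_coe, mem_filter, Equiv.apply_symm_apply, Nat.div_eq_iff hn,
            mem_univ, true_and]
          omega
    _ = n := by simp

lemma isFiberRegular_div (r : α ≃ Fin N) (hn : 0 < n) (hN : n ∣ N) :
    IsFiberRegular univ (fun x => (r x : ℕ) / n) n := fun x _ => by
  refine card_filter_div_eq r hn ?_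
  calc ((r x : ℕ) / n + 1) * n ≤ N / n * n :=
        Nat.mul_le_mul_right _ (Nat.div_lt_div_of_lt_of_dvd hN (r x).isLt)
    _ = N := Nat.div_mul_cancel hN

theorem exists_injective_color_block (hn : 0 < n) (r₁ r₂ : α ≃ Fin N) :
    ∃ a : α → Fin n, Injective (fun x => (a x, (r₁ x : ℕ) / n)) ∧
      Injective (fun x => (a x, (r₂ x : ℕ) / n)) := by
  classical
  -- dummy goods ranked after all real ones complete the last block
  obtain ⟨d, hd⟩ : ∃ d, n ∣ N + d :=
    ⟨n * N - N, N, by have := Nat.le_mul_of_pos_left N hn; omega⟩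
  let pad (r : α ≃ Fin N) : α ⊕ Fin d ≃ Fin (N + d) :=
    (r.sumCongr (Equiv.refl _)).trans finSumFinEquiv
  have hpad (r : α ≃ Fin N) (x : α) : (pad r (.inl x) : ℕ) = r x := by simp [pad]
  obtain ⟨a, ha, h₁, h₂⟩ :=
    (isFiberRegular_div (pad r₁) hn hd).exists_coloring (isFiberRegular_div (pad r₂) hn hd)
  refine ⟨fun x => ⟨a (.inl x), ha _ (mem_univ _)⟩, fun x y hxy => ?_, fun x y hxy => ?_⟩
  · exact Sum.inl_injective (h₁ (mem_univ _) (mem_univ _) (by simpa [hpad] using hxy))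
  · exact Sum.inl_injective (h₂ (mem_univ _) (mem_univ _) (by simpa [hpad] using hxy))

variable {r : α ≃ Fin N} {a : α → Fin n}

lemma exists_color_mem_block (ha : Injective fun x => (a x, (r x : ℕ) / n)) {b : ℕ}
    (hb : (b + 1) * n ≤ N) (i : Fin n) : ∃ x, (r x : ℕ) / n = b ∧ a x = i := by
  have hinj : Set.InjOn a ↑({x | (r x : ℕ) / n = b} : Finset α) := fun x hx y hy h => by
    simp only [mem_coe, mem_filter, mem_univ, true_and] at hx hy
    exact ha (Prod.ext h (hx.trans hy.symm))
  have himage : ({x | (r x : ℕ) / n = b} : Finset α).image a = univ := by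
    refine eq_univ_of_card _ ?_
    rw [card_image_of_injOn hinj, card_filter_div_eq r i.pos hb, Fintype.card_fin]
  obtain ⟨x, hx, rfl⟩ := mem_image.1 (himage ▸ mem_univ i)
  exact ⟨x, (mem_filter.1 hx).2, rfl⟩

lemma card_filter_color_rank_lt_le (ha : Injective fun x => (a x, (r x : ℕ) / n)) (j : Fin n)
    (k : ℕ) : #{x | a x = j ∧ (r x : ℕ) < k} ≤ k / n + 1 := by
  calc #{x | a x = j ∧ (r x : ℕ) < k} ≤ #(range (k / n + 1)) := by
        refine card_le_card_of_injOn (fun x => (r x : ℕ) / n) (fun x hx => ?_)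
          fun x hx y hy h => ha (Prod.ext ?_ h)
        · simp only [mem_coe, mem_filter, mem_univ, true_and, mem_range] at hx ⊢
          exact Nat.lt_succ_of_le (Nat.div_le_div_right hx.2.le)
        · simp only [mem_coe, mem_filter, mem_univ, true_and] at hx hy
          exact hx.1.trans hy.1.symm
    _ = k / n + 1 := card_range _

lemma le_card_filter_color_rank_lt (ha : Injective fun x => (a x, (r x : ℕ) / n)) (i : Fin n)
    {k : ℕ} (hk : k ≤ N) : k / n ≤ #{x | a x = i ∧ (r x : ℕ) < k} := by
  calc k / n = #(range (k / n)) := (card_range _).symm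
    _ ≤ #{x | a x = i ∧ (r x : ℕ) < k} := by
      refine card_le_card_of_surjOn (fun x => (r x : ℕ) / n) fun b hb => ?_
      have hbk : (b + 1) * n ≤ k := (Nat.le_div_iff_mul_le i.pos).1 (mem_range.1 hb)
      obtain ⟨x, hxb, hxi⟩ := exists_color_mem_block ha (hbk.trans hk) i
      refine ⟨x, ?_, hxb⟩
      have := Nat.lt_div_mul_add (a := (r x : ℕ)) i.pos
      simp only [mem_coe, mem_filter, mem_univ, true_and]
      rw [add_one_mul, ← hxb] at hbk
      exact ⟨hxi, by omega⟩

end Blocks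

section Ranking

variable {α β : Type*} [Fintype α] [LinearOrder β]

theorem exists_antitone_equivFin (w : α → β) :
    ∃ r : α ≃ Fin (Fintype.card α), Antitone (w ∘ r.symm) := by
  let e := Fintype.equivFin α
  let f := fun t => OrderDual.toDual (w (e.symm t))
  exact ⟨e.trans (Tuple.sort f).symm, monotone_toDual_comp_iff.1 (Tuple.monotone_sort f)⟩

lemma le_iff_rank_lt {N : ℕ} {w : α → β} {r : α ≃ Fin N} (hr : Antitone (w ∘ r.symm))
    (c : β) (x : α) : c ≤ w x ↔ (r x : ℕ) < #{y | c ≤ w y} := by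
  constructor
  · intro hcx
    have := card_le_card_of_injOn r.symm (s := Iic (r x)) (t := {y | c ≤ w y})
      (fun t ht => by simpa using hcx.trans (by simpa using hr (mem_Iic.1 ht)))
      r.symm.injective.injOn
    rw [Fin.card_Iic] at this
    omega
  · intro hx
    by_contra! hcx
    have := card_le_card_of_injOn r (s := {y | c ≤ w y}) (t := Iio (r x))
      (fun y hy => by
        simp only [mem_coe, mem_filter, mem_univ, true_and] at hy
        exact mem_Iio.2 (lt_of_not_ge fun h => (hcx.trans_le hy).not_ge (by simpa using hr h)))
      r.injective.injOn
    rw [Fin.card_Iio] at this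
    omega

end Ranking

theorem sdPair_filter_color {M : Type*} [Fintype M] [DecidableEq M] {N n : ℕ} (w : M → ℝ)
    (r : M ≃ Fin N) (hr : Antitone (w ∘ r.symm)) (a : M → Fin n)
    (ha : Injective fun x => (a x, (r x : ℕ) / n)) (i j : Fin n) :
    sdPair w {x | a x = i} {x | a x = j} := by
  rcases eq_empty_or_nonempty ({x | a x = j} : Finset M) with hY | hY
  · exact Or.inl hY
  obtain ⟨g, hgY, hgmax⟩ := exists_max_image _ w hY
  refine Or.inr ⟨g, hgY, fun h => ?_⟩
  by_cases hg : w h ≤ w g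
  · set k := #{y | w h ≤ w y}
    have hprefix (l : Fin n) :
        ({x | a x = l} : Finset M).filter (w h ≤ w ·) =
          ({x | a x = l ∧ (r x : ℕ) < k} : Finset M) := by
      rw [filter_filter]
      exact filter_congr fun x _ => and_congr_right' (le_iff_rank_lt hr _ x)
    have hk : k ≤ N := (card_le_card_of_injOn r (fun _ _ => mem_coe.2 (mem_univ _))
      r.injective.injOn).trans (by simp)
    have hgk : g ∈ ({x | a x = j ∧ (r x : ℕ) < k} : Finset M) :=
      hprefix j ▸ mem_filter.2 ⟨hgY, hg⟩
    rw [filter_erase, hprefix, hprefix, card_erase_of_mem hgk]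
    have := card_filter_color_rank_lt_le ha j k
    have := le_card_filter_color_rank_lt ha i hk
    omega
  · rw [filter_eq_empty_iff.2 fun x hx hhx => hg (hhx.trans (hgmax x (mem_of_mem_erase hx))),
      card_empty]
    exact Nat.zero_le _

theorem stmt_4_general {n : ℕ} (hn : 0 < n) {M : Type*} [Fintype M] [DecidableEq M]
    (u : Fin n → M → ℝ) (v : M → ℝ)
    (hsame : ∀ i j (g g' : M), u i g ≤ u i g' ↔ u j g ≤ u j g') :
    ∃ A : Fin n → Finset M, (∀ g : M, ∃! i, g ∈ A i) ∧
      (∀ i j, sdPair (u i) (A i) (A j)) ∧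
      (∀ i j, sdPair v (A i) (A j)) := by
  obtain ⟨r₁, hr₁⟩ := exists_antitone_equivFin (u ⟨0, hn⟩)
  obtain ⟨r₂, hr₂⟩ := exists_antitone_equivFin v
  obtain ⟨a, ha₁, ha₂⟩ := exists_injective_color_block hn r₁ r₂
  refine ⟨fun i => {x | a x = i},
    fun g => ⟨a g, by simp, fun i hi => by simpa [eq_comm] using hi⟩, fun i j => ?_,
    fun i j => sdPair_filter_color v r₂ hr₂ a ha₂ i j⟩
  have hr : Antitone (u i ∘ r₁.symm) := fun s t hst => (hsame _ i _ _).1 (hr₁ hst)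
  exact sdPair_filter_color (u i) r₁ hr a ha₁ i j

/-- When all agents' additive subjective utilities induce the same ranking over
the goods, there exists an allocation that is SD-EF1 with respect to all
subjective utilities and SD-EF1 with respect to the market valuation. -/
theorem stmt_4 {n : ℕ} (hn : 0 < n) {M : Type*} [Fintype M] [DecidableEq M]
    (u : Fin n → M → ℝ) (v : M → ℝ)
    (hnn : ∀ i g, 0 ≤ u i g) (hnnv : ∀ g, 0 ≤ v g)
    (hsame : ∀ i j (g g' : M), u i g ≤ u i g' ↔ u j g ≤ u j g') :
    ∃ A : Fin n → Finset M, (∀ g : M, ∃! i, g ∈ A i) ∧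
      (∀ i j, sdPair (u i) (A i) (A j)) ∧
      (∀ i j, sdPair v (A i) (A j)) :=
  stmt_4_general hn u v hsame
end

section
/- There exists an instance with 2 agents and 6 indivisible goods, with additive subjective utilities u_1 = (19,7,4,3,2,1) and u_2 = (8,7,6,5,4,3) for goods g_1,…,g_6 and additive market valuation v = u_1, in which no allocation is simultaneously Pareto optimal with respect to the subjective utilities and SD-EF1 with respect to the market valuation. -/
/-!
Since `v = u₁` ranks the goods strictly, SD-EF1 in both directions says that along the ranking
the two agents' prefix counts never differ by more than one; hence each agent receives exactly
one good of each of the pairs `{g₁, g₂}`, `{g₃, g₄}`, `{g₅, g₆}`. Every such allocation is Pareto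
dominated: if agent 1 holds `g₁`, it trades its two minor goods for `g₂`; otherwise it takes `g₁`
alone and leaves everything else to agent 2.
-/

open Finset

def util₁ : Fin 6 → ℝ := ![19, 7, 4, 3, 2, 1]
def util₂ : Fin 6 → ℝ := ![8, 7, 6, 5, 4, 3]

section SDEF1

variable {M : Type*} [Fintype M] [DecidableEq M] {w : M → ℝ}

theorem sdPair.card_filter_le {X Y : Finset M} (hXY : sdPair w X Y) (h : M) :
    #(Y.filter fun x => w h ≤ w x) ≤ #(X.filter fun x => w h ≤ w x) + 1 := by
  rcases hXY with rfl | ⟨g, -, hg⟩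
  · simp
  · have hErase := hg h
    rw [filter_erase] at hErase
    have := pred_card_le_card_erase (s := Y.filter fun x => w h ≤ w x) (a := g)
    omega

theorem card_filter_add_card_filter_compl (A : Finset M) (p : M → Prop) [DecidablePred p] :
    #(A.filter p) + #(Aᶜ.filter p) = #(univ.filter p) := by
  rw [← card_union_of_disjoint (disjoint_filter_filter disjoint_compl_right), ← filter_union,
    union_compl]

theorem card_filter_eq_of_sdPair_compl {A : Finset M} (h₁ : sdPair w A Aᶜ) (h₂ : sdPair w Aᶜ A)
    (h : M) {k : ℕ} (hk : #(univ.filter fun x => w h ≤ w x) = 2 * k) :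
    #(A.filter fun x => w h ≤ w x) = k := by
  have := card_filter_add_card_filter_compl A (fun x => w h ≤ w x)
  have := h₁.card_filter_le h
  have := h₂.card_filter_le h
  omega

end SDEF1

theorem util₁_strictAnti : StrictAnti util₁ := by
  refine Fin.strictAnti_iff_succ_lt.mpr fun i => ?_
  fin_cases i <;> norm_num [util₁, Fin.succ]

theorem mem_pairs_of_card_prefix {A : Finset (Fin 6)} (h₁ : #(A.filter (· ≤ 1)) = 1)
    (h₃ : #(A.filter (· ≤ 3)) = 2) (h₅ : #(A.filter (· ≤ 5)) = 3) :
    (0 ∈ A ↔ 1 ∉ A) ∧ (2 ∈ A ↔ 3 ∉ A) ∧ (4 ∈ A ↔ 5 ∉ A) := by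
  revert A
  decide

theorem mem_pairs_of_sdPair_compl {A : Finset (Fin 6)} (h₁ : sdPair util₁ A Aᶜ)
    (h₂ : sdPair util₁ Aᶜ A) : (0 ∈ A ↔ 1 ∉ A) ∧ (2 ∈ A ↔ 3 ∉ A) ∧ (4 ∈ A ↔ 5 ∉ A) := by
  have card_prefix (h : Fin 6) (k : ℕ) (hk : #(univ.filter (· ≤ h)) = 2 * k) :
      #(A.filter (· ≤ h)) = k := by
    simp only [← util₁_strictAnti.le_iff_ge] at hk ⊢
    exact card_filter_eq_of_sdPair_compl h₁ h₂ h hk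
  exact mem_pairs_of_card_prefix (card_prefix 1 1 rfl) (card_prefix 3 2 rfl)
    (card_prefix 5 3 rfl)

theorem sum_lt_of_zero_mem {A : Finset (Fin 6)} (h₀ : 0 ∈ A) (h₁ : 1 ∉ A)
    (h₂₃ : 2 ∈ A ↔ 3 ∉ A) (h₄₅ : 4 ∈ A ↔ 5 ∉ A) :
    ∑ g ∈ A, util₁ g < ∑ g ∈ {0, 1}, util₁ g ∧ ∑ g ∈ Aᶜ, util₂ g < ∑ g ∈ {0, 1}ᶜ, util₂ g := by
  simp only [← Fintype.sum_ite_mem A, ← Fintype.sum_ite_mem Aᶜ,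
    ← Fintype.sum_ite_mem ({0, 1} : Finset (Fin 6))ᶜ, Fin.sum_univ_six, mem_compl, h₂₃, h₄₅, h₀, h₁]
  by_cases h₃ : 3 ∈ A <;> by_cases h₅ : 5 ∈ A <;> simp [h₃, h₅, util₁, util₂] <;> norm_num

theorem sum_lt_of_zero_not_mem {A : Finset (Fin 6)} (h₀ : 0 ∉ A) (h₁ : 1 ∈ A)
    (h₂₃ : 2 ∈ A ↔ 3 ∉ A) (h₄₅ : 4 ∈ A ↔ 5 ∉ A) :
    ∑ g ∈ A, util₁ g < ∑ g ∈ {0}, util₁ g ∧ ∑ g ∈ Aᶜ, util₂ g < ∑ g ∈ {0}ᶜ, util₂ g := by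
  simp only [← Fintype.sum_ite_mem A, ← Fintype.sum_ite_mem Aᶜ,
    ← Fintype.sum_ite_mem ({0} : Finset (Fin 6))ᶜ, Fin.sum_univ_six, mem_compl, h₂₃, h₄₅, h₀, h₁]
  by_cases h₃ : 3 ∈ A <;> by_cases h₅ : 5 ∈ A <;> simp [h₃, h₅, util₁, util₂] <;> norm_num

/-- In the instance with 2 agents, 6 goods, utilities `util₁`, `util₂` and
market valuation `v = util₁`, no allocation is Pareto optimal w.r.t. the
subjective utilities and SD-EF1 w.r.t. the market valuation. -/
theorem stmt_6 :
    ¬ ∃ A₁ A₂ : Finset (Fin 6), Disjoint A₁ A₂ ∧ A₁ ∪ A₂ = Finset.univ ∧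
      -- Pareto optimality w.r.t. (util₁, util₂)
      (¬ ∃ B₁ B₂ : Finset (Fin 6), Disjoint B₁ B₂ ∧ B₁ ∪ B₂ = Finset.univ ∧
        (∑ g ∈ A₁, util₁ g) ≤ (∑ g ∈ B₁, util₁ g) ∧
        (∑ g ∈ A₂, util₂ g) ≤ (∑ g ∈ B₂, util₂ g) ∧
        ((∑ g ∈ A₁, util₁ g) < (∑ g ∈ B₁, util₁ g) ∨
          (∑ g ∈ A₂, util₂ g) < (∑ g ∈ B₂, util₂ g))) ∧
      -- SD-EF1 w.r.t. the market valuation v = util₁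
      sdPair util₁ A₁ A₂ ∧ sdPair util₁ A₂ A₁ := by
  rintro ⟨A, A₂, hdisj, hunion, hPO, h₁₂, h₂₁⟩
  obtain rfl : A₂ = Aᶜ := by
    rw [compl_eq_univ_sdiff, ← hunion, union_sdiff_cancel_left hdisj]
  obtain ⟨h₀₁, h₂₃, h₄₅⟩ := mem_pairs_of_sdPair_compl h₁₂ h₂₁
  have dominated {B : Finset (Fin 6)}
      (hB : ∑ g ∈ A, util₁ g < ∑ g ∈ B, util₁ g ∧ ∑ g ∈ Aᶜ, util₂ g < ∑ g ∈ Bᶜ, util₂ g) :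
      False :=
    hPO ⟨B, Bᶜ, disjoint_compl_right, union_compl B, hB.1.le, hB.2.le, Or.inl hB.1⟩
  by_cases h₀ : 0 ∈ A
  · exact dominated (sum_lt_of_zero_mem h₀ (h₀₁.mp h₀) h₂₃ h₄₅)
  · exact dominated (sum_lt_of_zero_not_mem h₀ (by tauto) h₂₃ h₄₅)
end

section
/- For every n ≥ 2 and every α > 1/n, there exists a fair-division instance with n agents, 2n−1 goods, identical additive subjective utilities u and an additive market valuation v, such that no allocation is simultaneously α-MMS with respect to u and EF1 with respect to v, and no allocation is simultaneously α-MMS with respect to u and α-MMS with respect to v. Concretely: u assigns value 1 to each of n goods in M_1 and value n to each of n−1 goods in M_2, while v assigns 1 to goods in M_1 and 0 to goods in M_2. -/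
/-!
If `A` is `α`-MMS for `u`, every bundle is worth more than `1`: the maximin share of `u` is `n`
(all unit goods in one bundle, each good of value `n` alone) and `α n > 1`. Only `n - 1` goods
are worth `n`, so some agent holds none of them and hence at least two of the `n` unit goods;
the other `n - 1` agents then share at most `n - 2` unit goods, so one of them has `v`-value `0`.
She envies the first agent even after one good is removed, and she falls short of the positive
`v`-maximin share.
-/

open Finset

/-- `A` is a complete partition of the goods among the `n` agents. -/
def partitionOf {n : ℕ} {M : Type*} (A : Fin n → Finset M) : Prop :=
  ∀ g : M, ∃! i, g ∈ A i

/-- `A` is `α`-MMS w.r.t. additive valuation `w`: each agent's value is at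
least `α` times her maximin share (expressed by quantifying over all
partitions; for `α ≥ 0` this is equivalent to the max-min formulation). -/
def alphaMMS {n : ℕ} {M : Type*} (α : ℝ) (w : M → ℝ) (A : Fin n → Finset M) : Prop :=
  ∀ i, ∀ B : Fin n → Finset M, partitionOf B →
    ∃ k, α * (∑ g ∈ B k, w g) ≤ ∑ g ∈ A i, w g

/-- `A` is EF1 w.r.t. additive valuation `w`. -/
def EF1alloc {n : ℕ} {M : Type*} [DecidableEq M] (w : M → ℝ) (A : Fin n → Finset M) : Prop :=
  ∀ i j, A j = ∅ ∨ ∃ g ∈ A j, (∑ x ∈ (A j).erase g, w x) ≤ ∑ x ∈ A i, w x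

section Allocation

variable {n : ℕ} {M : Type*}

lemma partitionOf_fibers [Fintype M] (f : M → Fin n) :
    partitionOf fun k => ({g | f g = k} : Finset M) :=
  fun g => ⟨f g, by simp, fun _ hk => (mem_filter.mp hk).2.symm⟩

lemma partitionOf.sum_sum [Fintype M] {β : Type*} [AddCommMonoid β] {A : Fin n → Finset M}
    (hA : partitionOf A) (w : M → β) : ∑ i, ∑ g ∈ A i, w g = ∑ g, w g := by
  classical
  calc ∑ i, ∑ g ∈ A i, w g = ∑ i, ∑ g, if g ∈ A i then w g else 0 := by
        simp only [sum_ite_mem, univ_inter]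
    _ = ∑ g, ∑ i, if g ∈ A i then w g else 0 := sum_comm
    _ = ∑ g, w g := ?_
  refine sum_congr rfl fun g _ => ?_
  obtain ⟨i, hi, huniq⟩ := hA g
  rw [Fintype.sum_eq_single i fun k hk => if_neg fun hg => hk (huniq k hg), if_pos hi]

lemma partitionOf.sum_card_filter [Fintype M] {A : Fin n → Finset M} (hA : partitionOf A)
    (p : M → Prop) [DecidablePred p] : ∑ i, #{g ∈ A i | p g} = #{g | p g} := by
  simp_rw [card_filter]
  exact hA.sum_sum _

lemma alphaMMS.mul_le {α m : ℝ} {w : M → ℝ} {A B : Fin n → Finset M} (hA : alphaMMS α w A)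
    (hα : 0 ≤ α) (hB : partitionOf B) (hm : ∀ k, m ≤ ∑ g ∈ B k, w g) (i : Fin n) :
    α * m ≤ ∑ g ∈ A i, w g := by
  obtain ⟨k, hk⟩ := hA i B hB
  exact (mul_le_mul_of_nonneg_left (hm k) hα).trans hk

lemma EF1alloc.sum_le_sum_add_one [DecidableEq M] {w : M → ℝ} {A : Fin n → Finset M}
    (hA : EF1alloc w A) (hw : ∀ g, w g ∈ Set.Icc 0 1) (i j : Fin n) :
    ∑ g ∈ A i, w g ≤ ∑ g ∈ A j, w g + 1 := by
  rcases hA j i with hi | ⟨g, hg, hle⟩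
  · simpa [hi] using add_nonneg (sum_nonneg fun g _ => (hw g).1) zero_le_one
  · rw [sum_erase_eq_sub hg] at hle
    linarith [(hw g).2]

end Allocation

lemma Finset.exists_eq_zero_of_sum_lt_card {ι : Type*} {s : Finset ι} {f : ι → ℕ}
    (h : ∑ i ∈ s, f i < #s) : ∃ i ∈ s, f i = 0 := by
  obtain ⟨i, hi, hlt⟩ := exists_lt_of_sum_lt (g := fun _ => 1) (by simpa using h)
  exact ⟨i, hi, Nat.lt_one_iff.mp hlt⟩

lemma exists_two_le_and_eq_zero {ι : Type*} [Fintype ι] {s b : ι → ℕ}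
    (hb : ∑ i, b i < Fintype.card ι) (hs : ∑ i, s i ≤ Fintype.card ι)
    (hsb : ∀ i, b i = 0 → 2 ≤ s i) : ∃ i j, 2 ≤ s i ∧ s j = 0 := by
  classical
  obtain ⟨i, -, hi⟩ := exists_eq_zero_of_sum_lt_card (s := univ) hb
  have hsi := hsb i hi
  obtain ⟨j, -, hj⟩ := exists_eq_zero_of_sum_lt_card (s := univ.erase i) (f := s) (by
    have := add_sum_erase univ s (mem_univ i)
    rw [card_erase_of_mem (mem_univ i), card_univ]
    omega)
  exact ⟨i, j, hsi, hj⟩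

def subjectiveUtility (n : ℕ) (g : Fin (2 * n - 1)) : ℝ := if (g : ℕ) < n then 1 else n

def marketValuation (n : ℕ) (g : Fin (2 * n - 1)) : ℝ := if (g : ℕ) < n then 1 else 0

section Instance

variable {n : ℕ}

lemma sum_subjectiveUtility (T : Finset (Fin (2 * n - 1))) :
    ∑ g ∈ T, subjectiveUtility n g = #{g ∈ T | g.val < n} + n * #{g ∈ T | ¬ g.val < n} := by
  simp only [subjectiveUtility]
  rw [sum_ite, sum_const, sum_const, nsmul_eq_mul, nsmul_eq_mul, mul_one]
  ring

lemma sum_marketValuation (T : Finset (Fin (2 * n - 1))) :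
    ∑ g ∈ T, marketValuation n g = #{g ∈ T | g.val < n} := by
  simp [marketValuation]

lemma card_filter_lt : #{g : Fin (2 * n - 1) | g.val < n} = n := by
  rw [Fin.card_filter_val_lt]
  omega

lemma card_filter_not_lt : #{g : Fin (2 * n - 1) | ¬ g.val < n} = n - 1 := by
  have := card_filter_add_card_filter_not (s := univ) fun g : Fin (2 * n - 1) => g.val < n
  rw [card_filter_lt, card_univ, Fintype.card_fin] at this
  omega

lemma subjectiveUtility_nonneg (g : Fin (2 * n - 1)) : 0 ≤ subjectiveUtility n g := by
  unfold subjectiveUtility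
  split <;> positivity

lemma marketValuation_mem_Icc (g : Fin (2 * n - 1)) : marketValuation n g ∈ Set.Icc 0 1 := by
  unfold marketValuation
  split <;> simp

lemma exists_partitionOf_le_sum_subjectiveUtility :
    ∃ B : Fin n → Finset (Fin (2 * n - 1)), partitionOf B ∧
      ∀ k, (n : ℝ) ≤ ∑ g ∈ B k, subjectiveUtility n g := by
  let f : Fin (2 * n - 1) → Fin n := fun g =>
    if h : g.val < n then ⟨0, by omega⟩ else ⟨g - n + 1, by omega⟩
  refine ⟨_, partitionOf_fibers f, fun k => ?_⟩
  rcases Nat.eq_zero_or_pos k with hk | hk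
  · have hsmall : ({g | g.val < n} : Finset (Fin (2 * n - 1))) ⊆ ({g | f g = k} : Finset _) := by
      intro g hg
      simp only [mem_filter, mem_univ, true_and] at hg ⊢
      simp [f, hg, Fin.ext_iff, hk]
    calc (n : ℝ) = ∑ g ∈ {g : Fin (2 * n - 1) | g.val < n}, subjectiveUtility n g := by
          rw [sum_subjectiveUtility, filter_filter, filter_filter]
          simp [card_filter_lt]
      _ ≤ _ := sum_le_sum_of_subset_of_nonneg hsmall fun g _ _ => subjectiveUtility_nonneg g
  · have hbig : (⟨n + k - 1, by omega⟩ : Fin (2 * n - 1)) ∈ ({g | f g = k} : Finset _) := by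
      simp only [mem_filter, mem_univ, true_and, f]
      rw [dif_neg (by simp; omega)]
      ext
      simp only
      omega
    calc (n : ℝ) = subjectiveUtility n ⟨n + k - 1, by omega⟩ := by
          simp [subjectiveUtility]; omega
      _ ≤ _ := single_le_sum (fun g _ => subjectiveUtility_nonneg g) hbig

lemma exists_partitionOf_one_le_sum_marketValuation :
    ∃ B : Fin n → Finset (Fin (2 * n - 1)), partitionOf B ∧
      ∀ k, 1 ≤ ∑ g ∈ B k, marketValuation n g := by
  let f : Fin (2 * n - 1) → Fin n := fun g => ⟨g % n, Nat.mod_lt _ (by have := g.isLt; omega)⟩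
  refine ⟨_, partitionOf_fibers f, fun k => ?_⟩
  have hk : (⟨k, by omega⟩ : Fin (2 * n - 1)) ∈ ({g | f g = k} : Finset _) := by
    simp [f, Fin.ext_iff, Nat.mod_eq_of_lt k.isLt]
  calc (1 : ℝ) = marketValuation n ⟨k, by omega⟩ := by simp [marketValuation]
    _ ≤ _ := single_le_sum (fun g _ => (marketValuation_mem_Icc g).1) hk

lemma one_lt_sum_subjectiveUtility {α : ℝ} (hα : 1 / (n : ℝ) < α)
    {A : Fin n → Finset (Fin (2 * n - 1))} (hA : alphaMMS α (subjectiveUtility n) A) (i : Fin n) :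
    1 < ∑ g ∈ A i, subjectiveUtility n g := by
  obtain ⟨B, hB, hBn⟩ := exists_partitionOf_le_sum_subjectiveUtility (n := n)
  calc 1 < α * n := (div_lt_iff₀ (Nat.cast_pos.mpr i.pos)).mp hα
    _ ≤ _ := hA.mul_le ((by positivity : (0 : ℝ) ≤ 1 / n).trans hα.le) hB hBn i

lemma sum_marketValuation_pos {α : ℝ} (hα : 0 < α) {A : Fin n → Finset (Fin (2 * n - 1))}
    (hA : alphaMMS α (marketValuation n) A) (i : Fin n) :
    0 < ∑ g ∈ A i, marketValuation n g := by
  obtain ⟨B, hB, hB1⟩ := exists_partitionOf_one_le_sum_marketValuation (n := n)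
  simpa using (mul_pos hα one_pos).trans_le (hA.mul_le hα.le hB hB1 i)

lemma exists_two_le_and_eq_zero_of_alphaMMS (hn : 0 < n) {α : ℝ} (hα : 1 / (n : ℝ) < α)
    {A : Fin n → Finset (Fin (2 * n - 1))} (hA : partitionOf A)
    (hMMS : alphaMMS α (subjectiveUtility n) A) :
    ∃ i j, 2 ≤ #{g ∈ A i | g.val < n} ∧ #{g ∈ A j | g.val < n} = 0 := by
  refine exists_two_le_and_eq_zero (b := fun i => #{g ∈ A i | ¬ g.val < n}) ?_ ?_ fun i hi => ?_
  · rw [hA.sum_card_filter, card_filter_not_lt, Fintype.card_fin]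
    omega
  · rw [hA.sum_card_filter, card_filter_lt, Fintype.card_fin]
  · have h := one_lt_sum_subjectiveUtility hα hMMS i
    rw [sum_subjectiveUtility, hi, Nat.cast_zero, mul_zero, add_zero] at h
    exact_mod_cast h

end Instance

/-- For `n ≥ 2` and `α > 1/n`: in the instance with `2n-1` goods where `u` is
`1` on the first `n` goods and `n` on the remaining `n-1`, and `v` is `1` on
the first `n` goods and `0` on the rest, no allocation is simultaneously
`α`-MMS w.r.t. `u` and EF1 w.r.t. `v`, and no allocation is simultaneously
`α`-MMS w.r.t. `u` and `α`-MMS w.r.t. `v`. -/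
theorem stmt_7 (n : ℕ) (hn : 2 ≤ n) (α : ℝ) (hα : 1 / (n : ℝ) < α)
    (u v : Fin (2 * n - 1) → ℝ)
    (hu : ∀ g, u g = if (g : ℕ) < n then 1 else (n : ℝ))
    (hv : ∀ g, v g = if (g : ℕ) < n then 1 else 0) :
    ∀ A : Fin n → Finset (Fin (2 * n - 1)), partitionOf A →
      ¬ (alphaMMS α u A ∧ EF1alloc v A) ∧ ¬ (alphaMMS α u A ∧ alphaMMS α v A) := by
  intro A hA
  obtain rfl : u = subjectiveUtility n := funext hu
  obtain rfl : v = marketValuation n := funext hv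
  refine ⟨fun ⟨hMMS, hEF⟩ => ?_, fun ⟨hMMS, hMMSv⟩ => ?_⟩ <;>
    obtain ⟨i, j, hi, hj⟩ := exists_two_le_and_eq_zero_of_alphaMMS (by omega) hα hA hMMS
  · have h := hEF.sum_le_sum_add_one marketValuation_mem_Icc i j
    rw [sum_marketValuation, sum_marketValuation, hj, Nat.cast_zero] at h
    have hi' : (2 : ℝ) ≤ #{g ∈ A i | g.val < n} := by exact_mod_cast hi
    linarith
  · have hα0 : 0 < α := lt_of_le_of_lt (by positivity) hα
    have h := sum_marketValuation_pos hα0 hMMSv j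
    rw [sum_marketValuation, hj, Nat.cast_zero] at h
    exact h.false
end

section
/- For every α ∈ (0,1], there exists an instance with 2 agents and 4 goods, with identical additive subjective utilities u (giving value 1 to each good) and an additive market valuation v (with v(g_1) = 2/α + 1 and v(g_t) = 1 for t ∈ {2,3,4}), such that no allocation is simultaneously EF1 with respect to u and α-EFX with respect to v. -/
/-!
Under unit utilities, EF1 in both directions says the bundle sizes differ by at most one, so
the four goods are split two and two. Removing the other good from the bundle containing `g₁`
leaves value `2/α + 1`, while the opposite bundle is worth `2 < α * (2/α + 1) = 2 + α`,
which violates `α`-EFX.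
-/

open Finset

/-- EF1 condition for an ordered pair of bundles under additive valuation `w`. -/
def EF1pair {M : Type*} [DecidableEq M] (w : M → ℝ) (X Y : Finset M) : Prop :=
  Y = ∅ ∨ ∃ g ∈ Y, (∑ x ∈ Y.erase g, w x) ≤ ∑ x ∈ X, w x

/-- `α`-EFX condition for an ordered pair of bundles under additive valuation `w`. -/
def EFXpair {M : Type*} [DecidableEq M] (α : ℝ) (w : M → ℝ) (X Y : Finset M) : Prop :=
  Y = ∅ ∨ ∀ g ∈ Y, α * (∑ x ∈ Y.erase g, w x) ≤ ∑ x ∈ X, w x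

section

variable {M : Type*} [DecidableEq M] {X Y : Finset M}

theorem EF1pair.card_le_card_add_one (h : EF1pair (fun _ ↦ (1 : ℝ)) X Y) : #Y ≤ #X + 1 := by
  rcases h with rfl | ⟨g, hg, hle⟩
  · simp
  · simp only [sum_const, nsmul_eq_mul, mul_one, card_erase_of_mem hg] at hle
    have : #Y - 1 ≤ #X := by exact_mod_cast hle
    omega

theorem EFXpair.le {α : ℝ} {w : M → ℝ} (h : EFXpair α w X Y) {g : M} (hg : g ∈ Y) :
    α * ∑ x ∈ Y.erase g, w x ≤ ∑ x ∈ X, w x :=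
  h.resolve_left (ne_empty_of_mem hg) g hg

end

theorem Finset.exists_mem_erase_eq_singleton {M : Type*} [DecidableEq M] {A : Finset M} {a : M}
    (ha : a ∈ A) (hA : #A = 2) : ∃ j ∈ A, A.erase j = {a} := by
  obtain ⟨j, hj⟩ := card_eq_one.mp (by rw [card_erase_of_mem ha, hA] : #(A.erase a) = 1)
  have hjA : j ∈ A.erase a := hj ▸ mem_singleton_self j
  refine ⟨j, mem_of_mem_erase hjA, ?_⟩
  obtain ⟨b, hb⟩ := card_eq_one.mp
    (by rw [card_erase_of_mem (mem_of_mem_erase hjA), hA] : #(A.erase j) = 1)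
  have haj : a ∈ A.erase j := mem_erase.mpr ⟨(ne_of_mem_erase hjA).symm, ha⟩
  rw [hb, mem_singleton] at haj
  rw [hb, haj]

theorem not_EFXpair_of_zero_mem {α : ℝ} (hα : 0 < α) {A B : Finset (Fin 4)}
    (hAB : Disjoint A B) (hA : #A = 2) (hB : #B = 2) (h0 : 0 ∈ A) :
    ¬ EFXpair α ![2 / α + 1, 1, 1, 1] B A := by
  intro h
  obtain ⟨j, hj, hAj⟩ := exists_mem_erase_eq_singleton h0 hA
  have hB_one : ∀ x ∈ B, ![2 / α + 1, 1, 1, 1] x = 1 := by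
    intro x hx
    have hx0 : x ≠ 0 := fun hx0 ↦ disjoint_left.mp hAB h0 (hx0 ▸ hx)
    fin_cases x <;> simp_all
  have hle := h.le hj
  rw [hAj, sum_singleton, sum_congr rfl hB_one, sum_const, hB] at hle
  have : α * (2 / α + 1) = 2 + α := by field_simp
  norm_num [this] at hle
  linarith

theorem stmt_8_general (α : ℝ) (hα0 : 0 < α)
    (u v : Fin 4 → ℝ) (hu : ∀ g, u g = 1) (hv : v = ![2 / α + 1, 1, 1, 1]) :
    ∀ A₁ A₂ : Finset (Fin 4), Disjoint A₁ A₂ → A₁ ∪ A₂ = Finset.univ →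
      ¬ (EF1pair u A₁ A₂ ∧ EF1pair u A₂ A₁ ∧
          EFXpair α v A₁ A₂ ∧ EFXpair α v A₂ A₁) := by
  rintro A₁ A₂ hdis huni ⟨hef₁₂, hef₂₁, hefx₁₂, hefx₂₁⟩
  obtain rfl : u = fun _ ↦ 1 := funext hu
  subst hv
  have hcard : #A₁ + #A₂ = 4 := by rw [← card_union_of_disjoint hdis, huni]; rfl
  have := hef₁₂.card_le_card_add_one
  have := hef₂₁.card_le_card_add_one
  have hc₁ : #A₁ = 2 := by omega
  have hc₂ : #A₂ = 2 := by omega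
  rcases mem_union.mp (huni ▸ mem_univ 0 : (0 : Fin 4) ∈ A₁ ∪ A₂) with h0 | h0
  · exact not_EFXpair_of_zero_mem hα0 hdis hc₁ hc₂ h0 hefx₂₁
  · exact not_EFXpair_of_zero_mem hα0 hdis.symm hc₂ hc₁ h0 hefx₁₂

/-- For any `α ∈ (0,1]`: in the instance with 2 agents and 4 goods, `u ≡ 1`
and `v = (2/α + 1, 1, 1, 1)`, no allocation is simultaneously EF1 w.r.t. `u`
and `α`-EFX w.r.t. `v`. -/
theorem stmt_8 (α : ℝ) (hα0 : 0 < α) (hα1 : α ≤ 1)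
    (u v : Fin 4 → ℝ) (hu : ∀ g, u g = 1) (hv : v = ![2 / α + 1, 1, 1, 1]) :
    ∀ A₁ A₂ : Finset (Fin 4), Disjoint A₁ A₂ → A₁ ∪ A₂ = Finset.univ →
      ¬ (EF1pair u A₁ A₂ ∧ EF1pair u A₂ A₁ ∧
          EFXpair α v A₁ A₂ ∧ EFXpair α v A₂ A₁) :=
  stmt_8_general α hα0 u v hu hv
end

section
/- Consider the Minimal Envied Swap process: starting from all-empty bundles and charity C = M, repeatedly find a minimal envied feasible subset T of C (T satisfies |T ∩ M_k| ≤ 1 for all blocks k, some agent i has u_i(A_i) < u_i(T), and no agent envies a strict subset of T) and assign A_i := T, returning i's old bundle to charity. This process terminates after finitely many steps, and at termination no agent envies any feasible subset of the remaining charity. -/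
open Finset

/-- A subset is feasible if it has at most one good from each block. -/
def feasible {M : Type*} [Fintype M] [DecidableEq M] (blk : M → ℕ) (T : Finset M) : Prop :=
  ∀ k, (T.filter (fun g => blk g = k)).card ≤ 1

/-- The charity: goods not currently allocated to any agent. -/
def charity {n : ℕ} {M : Type*} [Fintype M] [DecidableEq M]
    (A : Fin n → Finset M) : Finset M :=
  Finset.univ.filter (fun g => ∀ i, g ∉ A i)

/-- One step of the Minimal Envied Swap process: some agent `i` swaps her
bundle for a minimal envied feasible subset `T` of the charity. -/
def mesStep {n : ℕ} {M : Type*} [Fintype M] [DecidableEq M] (blk : M → ℕ)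
    (u : Fin n → Finset M → ℝ) (A A' : Fin n → Finset M) : Prop :=
  ∃ T : Finset M, ∃ i : Fin n,
    T ⊆ charity A ∧ feasible blk T ∧ u i (A i) < u i T ∧
    (∀ j : Fin n, ∀ S : Finset M, S ⊂ T → ¬ u j (A j) < u j S) ∧
    A' = Function.update A i T

/-! The utilitarian welfare `∑ i, u i (A i)` strictly increases at every swap and
takes only finitely many values, so there is no infinite run. If some agent envied a feasible
subset of the charity, an inclusion-minimal envied feasible subset would be a legal swap. -/

section

variable {n : ℕ} {M : Type*} [Fintype M] [DecidableEq M] {blk : M → ℕ}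
  {u : Fin n → Finset M → ℝ}

def welfare (u : Fin n → Finset M → ℝ) (A : Fin n → Finset M) : ℝ :=
  ∑ i, u i (A i)

theorem feasible.mono {S T : Finset M} (hST : S ⊆ T) (hT : feasible blk T) :
    feasible blk S :=
  fun k => (card_le_card (filter_subset_filter _ hST)).trans (hT k)

theorem mesStep.welfare_lt {A A' : Fin n → Finset M} (h : mesStep blk u A A') :
    welfare u A < welfare u A' := by
  obtain ⟨T, i, -, -, hlt, -, rfl⟩ := h
  refine sum_lt_sum (fun j _ => ?_) ⟨i, mem_univ i, by simpa using hlt⟩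
  rcases eq_or_ne j i with rfl | hj
  · simpa using hlt.le
  · simp [hj]

theorem not_exists_infinite_mesStep_run :
    ¬ ∃ f : ℕ → (Fin n → Finset M), ∀ t, mesStep blk u (f t) (f (t + 1)) := by
  rintro ⟨f, hstep⟩
  have hmono : StrictMono (welfare u ∘ f) :=
    strictMono_nat_of_lt_succ fun t => (hstep t).welfare_lt
  exact not_injective_infinite_finite f (Function.Injective.of_comp hmono.injective)

theorem not_envied_of_not_mesStep {A : Fin n → Finset M} (hstuck : ¬ ∃ A', mesStep blk u A A')
    {T : Finset M} {i : Fin n} (hTC : T ⊆ charity A) (hT : feasible blk T) :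
    ¬ u i (A i) < u i T := by
  intro hi
  let envied : Set (Finset M) :=
    {S | S ⊆ charity A ∧ feasible blk S ∧ ∃ j, u j (A j) < u j S}
  obtain ⟨T₀, ⟨hT₀C, hT₀, j, hj⟩, hmin⟩ :=
    wellFounded_lt.has_min envied ⟨T, hTC, hT, i, hi⟩
  refine hstuck ⟨_, T₀, j, hT₀C, hT₀, hj, fun k S hS hk => ?_, rfl⟩
  exact hmin S ⟨hS.subset.trans hT₀C, hT₀.mono hS.subset, k, hk⟩ hS

end

theorem stmt_10_general {n : ℕ} {M : Type*} [Fintype M] [DecidableEq M] (blk : M → ℕ)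
    (u : Fin n → Finset M → ℝ) :
    (¬ ∃ f : ℕ → (Fin n → Finset M),
        f 0 = (fun _ => (∅ : Finset M)) ∧ ∀ t, mesStep blk u (f t) (f (t + 1))) ∧
    (∀ A : Fin n → Finset M, (¬ ∃ A', mesStep blk u A A') →
      ∀ (T : Finset M) (i : Fin n), T ⊆ charity A → feasible blk T →
        ¬ u i (A i) < u i T) :=
  ⟨fun ⟨f, _, hstep⟩ => not_exists_infinite_mesStep_run ⟨f, hstep⟩,
    fun _ hstuck _ _ hTC hT => not_envied_of_not_mesStep hstuck hTC hT⟩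

/-- The Minimal Envied Swap process terminates after finitely many steps when
started from the all-empty allocation, and any state at which no step applies
has no agent envying any feasible subset of the remaining charity. -/
theorem stmt_10 {n : ℕ} {M : Type*} [Fintype M] [DecidableEq M] (blk : M → ℕ)
    (u : Fin n → Finset M → ℝ)
    (hmono : ∀ i (X Y : Finset M), X ⊆ Y → u i X ≤ u i Y) :
    (¬ ∃ f : ℕ → (Fin n → Finset M),
        f 0 = (fun _ => (∅ : Finset M)) ∧ ∀ t, mesStep blk u (f t) (f (t + 1))) ∧
    (∀ A : Fin n → Finset M, (¬ ∃ A', mesStep blk u A A') →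
      ∀ (T : Finset M) (i : Fin n), T ⊆ charity A → feasible blk T →
        ¬ u i (A i) < u i T) :=
  stmt_10_general blk u
end

section
/- There exists a cake-division instance with n agents having identical subjective value density u (density 2 on [0, 1/2] and 0 on [1/2, 1]) and market density v ≡ 1 on [0,1], in which every allocation that is envy-free with respect to both the subjective utilities and the market valuation, and whose pieces are finite unions of intervals, uses at least 2n−2 cuts (i.e., consists of at least 2n−1 intervals in total). -/
open MeasureTheory Set

/-- The piece of cake described by a finite set of closed intervals. -/
def pieceSet (P : Finset (ℝ × ℝ)) : Set ℝ := ⋃ p ∈ P, Set.Icc p.1 p.2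

/-!
Write `L = [0,1/2]` and `R = [1/2,1]`. Envy-freeness makes `|A_i ∩ L|` and `|A_i|` independent
of `i`, hence also `|A_i ∩ R| = |A_i| - |A_i ∩ L|`. As the pieces cover `L` and `R`, which have
positive length, every piece meets both halves in positive measure. A piece made of a single
interval must therefore contain `1/2` in its interior, and two such pieces would overlap in
positive measure. So at most one piece is a single interval and all others have at least two.
-/

@[simp]
lemma pieceSet_empty : pieceSet ∅ = ∅ := by
  simp [pieceSet]

@[simp]
lemma pieceSet_singleton (p : ℝ × ℝ) : pieceSet {p} = Icc p.1 p.2 := by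
  simp [pieceSet]

lemma measurableSet_pieceSet (P : Finset (ℝ × ℝ)) : MeasurableSet (pieceSet P) :=
  P.measurableSet_biUnion fun _ _ => measurableSet_Icc

lemma nonempty_of_measure_pieceSet_inter_pos {μ : Measure ℝ} {P : Finset (ℝ × ℝ)}
    {S : Set ℝ} (h : 0 < μ (pieceSet P ∩ S)) : P.Nonempty := by
  rw [Finset.nonempty_iff_ne_empty]
  rintro rfl
  simp at h

lemma volume_Icc_inter_Icc_pos_iff {a b c d : ℝ} :
    0 < volume (Icc a b ∩ Icc c d) ↔ a ⊔ c < b ⊓ d := by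
  rw [Icc_inter_Icc, Real.volume_Icc, ENNReal.ofReal_pos, sub_pos]

lemma volume_Icc_inter_Icc_pos_of_mem_Ioo {a b a' b' c : ℝ} (h : c ∈ Ioo a b)
    (h' : c ∈ Ioo a' b') : 0 < volume (Icc a b ∩ Icc a' b') :=
  volume_Icc_inter_Icc_pos_iff.mpr
    ((sup_lt_iff.mpr ⟨h.1, h'.1⟩).trans (lt_inf_iff.mpr ⟨h.2, h'.2⟩))

lemma measure_eq_inter_Icc_add_inter_Icc {μ : Measure ℝ} [NullSingletonClass μ] {A : Set ℝ}
    {a b c : ℝ} (hA : MeasurableSet A) (hsub : A ⊆ Icc a c) :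
    μ A = μ (A ∩ Icc a b) + μ (A ∩ Icc b c) := by
  have hsplit : A = A ∩ Icc a b ∪ A ∩ Icc b c := by
    rw [← inter_union_distrib_left]
    refine (inter_eq_left.mpr fun x hx => ?_).symm
    rcases le_total x b with hxb | hxb
    exacts [Or.inl ⟨(hsub hx).1, hxb⟩, Or.inr ⟨hxb, (hsub hx).2⟩]
  have hdisj : AEDisjoint μ (A ∩ Icc a b) (A ∩ Icc b c) := by
    refine measure_mono_null (fun x hx => ?_) (measure_singleton b)
    exact le_antisymm hx.1.2.2 hx.2.2.1
  conv_lhs => rw [hsplit]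
  exact measure_union₀ (hA.inter measurableSet_Icc).nullMeasurableSet hdisj

lemma measure_inter_pos_of_subset_iUnion {α ι : Type*} [MeasurableSpace α] [Countable ι]
    {μ : Measure α} {A : ι → Set α} {S : Set α} (hS : μ S ≠ 0) (hcover : S ⊆ ⋃ i, A i)
    (heq : ∀ i j, μ (A i ∩ S) = μ (A j ∩ S)) (i : ι) : 0 < μ (A i ∩ S) := by
  refine pos_iff_ne_zero.mpr fun h0 => hS (measure_mono_null ?_ (measure_iUnion_null fun j =>
    (heq j i).trans h0))
  rw [← iUnion_inter]
  exact subset_inter hcover subset_rfl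

lemma exists_eq_singleton_of_card_lt_two {P : Finset (ℝ × ℝ)} {a b c : ℝ} (hcard : P.card < 2)
    (hL : 0 < volume (pieceSet P ∩ Icc a c)) (hR : 0 < volume (pieceSet P ∩ Icc c b)) :
    ∃ p, P = {p} ∧ c ∈ Ioo p.1 p.2 := by
  obtain ⟨p, rfl⟩ : ∃ p, P = {p} := Finset.card_eq_one.mp <|
    le_antisymm (Nat.lt_succ_iff.mp hcard)
      (nonempty_of_measure_pieceSet_inter_pos hL).card_pos
  rw [pieceSet_singleton, volume_Icc_inter_Icc_pos_iff] at hL hR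
  exact ⟨p, rfl, (le_sup_left.trans_lt hL).trans_le inf_le_right,
    (le_sup_right.trans_lt hR).trans_le inf_le_left⟩

lemma two_mul_card_sub_one_le_sum {ι : Type*} [Fintype ι] (c : ι → ℕ) (hpos : ∀ i, 1 ≤ c i)
    (hunique : ∀ i j, c i < 2 → c j < 2 → i = j) : 2 * Fintype.card ι - 1 ≤ ∑ i, c i := by
  classical
  have hsmall : (Finset.univ.filter fun i => c i < 2).card ≤ 1 :=
    Finset.card_le_one.mpr fun i hi j hj =>
      hunique i j (Finset.mem_filter.mp hi).2 (Finset.mem_filter.mp hj).2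
  have hle : ∑ _i : ι, 2 ≤ ∑ i, (c i + if c i < 2 then 1 else 0) :=
    Finset.sum_le_sum fun i _ => by have := hpos i; split_ifs <;> omega
  rw [Finset.sum_add_distrib, Finset.sum_boole, Finset.sum_const, Finset.card_univ,
    smul_eq_mul] at hle
  push_cast at hle
  omega

theorem stmt_12_general (n : ℕ) (P : Fin n → Finset (ℝ × ℝ))
    (hsub : ∀ i, pieceSet (P i) ⊆ Icc 0 1)
    (hcover : Icc (0 : ℝ) 1 ⊆ ⋃ i, pieceSet (P i))
    (hdisj : ∀ i j, i ≠ j → volume (pieceSet (P i) ∩ pieceSet (P j)) = 0)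
    (hEFu : ∀ i j, volume (pieceSet (P j) ∩ Icc 0 (1 / 2)) ≤
        volume (pieceSet (P i) ∩ Icc 0 (1 / 2)))
    (hEFv : ∀ i j, volume (pieceSet (P i)) = volume (pieceSet (P j))) :
    2 * n - 1 ≤ ∑ i, (P i).card := by
  have hsplit i := measure_eq_inter_Icc_add_inter_Icc (μ := volume) (b := 1 / 2)
    (measurableSet_pieceSet (P i)) (hsub i)
  have hL i j :
      volume (pieceSet (P i) ∩ Icc 0 (1 / 2)) = volume (pieceSet (P j) ∩ Icc 0 (1 / 2)) :=
    le_antisymm (hEFu j i) (hEFu i j)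
  have hR i j :
      volume (pieceSet (P i) ∩ Icc (1 / 2) 1) = volume (pieceSet (P j) ∩ Icc (1 / 2) 1) := by
    have hfin : volume (pieceSet (P i) ∩ Icc 0 (1 / 2)) ≠ ⊤ :=
      ((measure_mono inter_subset_right).trans_lt measure_Icc_lt_top).ne
    rw [← ENNReal.add_right_inj hfin, ← hsplit, hL i j, ← hsplit, hEFv]
  have hposL := measure_inter_pos_of_subset_iUnion (by norm_num)
    ((Icc_subset_Icc_right (by norm_num)).trans hcover) hL
  have hposR := measure_inter_pos_of_subset_iUnion (by norm_num)
    ((Icc_subset_Icc_left (by norm_num)).trans hcover) hR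
  simpa using two_mul_card_sub_one_le_sum (fun i => (P i).card)
    (fun i => (nonempty_of_measure_pieceSet_inter_pos (hposL i)).card_pos)
    fun i j hi hj => by
      by_contra hij
      obtain ⟨p, hp, hpc⟩ := exists_eq_singleton_of_card_lt_two hi (hposL i) (hposR i)
      obtain ⟨q, hq, hqc⟩ := exists_eq_singleton_of_card_lt_two hj (hposL j) (hposR j)
      have hnull := hdisj i j hij
      rw [hp, hq, pieceSet_singleton, pieceSet_singleton] at hnull
      exact (volume_Icc_inter_Icc_pos_of_mem_Ioo hpc hqc).ne' hnull

/-- In the instance where every agent's density is `2` on `[0,1/2]` and `0`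
on `[1/2,1]` (so envy-freeness under `u` means equal measure of
`A_i ∩ [0,1/2]`) and the market density is `1` on `[0,1]` (so envy-freeness
under `v` means equal measure of `A_i`), every allocation into finite unions
of intervals that is envy-free w.r.t. both valuations uses at least `2n-2`
cuts, i.e. consists of at least `2n-1` intervals in total. -/
theorem stmt_12 (n : ℕ) (hn : 0 < n) (P : Fin n → Finset (ℝ × ℝ))
    (hsub : ∀ i, pieceSet (P i) ⊆ Icc 0 1)
    (hcover : Icc (0 : ℝ) 1 ⊆ ⋃ i, pieceSet (P i))
    (hdisj : ∀ i j, i ≠ j → volume (pieceSet (P i) ∩ pieceSet (P j)) = 0)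
    (hEFu : ∀ i j, volume (pieceSet (P j) ∩ Icc 0 (1 / 2)) ≤
        volume (pieceSet (P i) ∩ Icc 0 (1 / 2)))
    (hEFv : ∀ i j, volume (pieceSet (P i)) = volume (pieceSet (P j))) :
    2 * n - 1 ≤ ∑ i, (P i).card :=
  stmt_12_general n P hsub hcover hdisj hEFu hEFv
end

section
/- Let c = 2/α + 1 for α ∈ (0,1]. In the instance with 4 goods where valuation u is identically 1 and valuation v gives value c to good g_1 and 1 to each other good: every allocation of the 4 goods between 2 agents that is EF1 with respect to u gives each agent exactly 2 goods, and in any such allocation, the agent not receiving g_1 has v-value 2 while removing any single good other than g_1 from the other agent's bundle leaves v-value c = 2/α + 1, strictly exceeding (1/α)·2; therefore α·v(A_1 \ {g}) > v(A_2) for the cheapest removable good g, i.e., the allocation violates α-EFX with respect to v. -/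
open Finset

lemma key_aux (α c : ℝ) (hα0 : 0 < α) (hac : α * c = 2 + α)
    (v : Fin 4 → ℝ) (hv0 : v 0 = c) (hv1 : ∀ x : Fin 4, x ≠ 0 → v x = 1)
    (S T : Finset (Fin 4)) (hS : S.card = 2) (h0S : (0 : Fin 4) ∈ S)
    (h0T : (0 : Fin 4) ∉ T) (hT : T.card = 2) : ¬ EFXpair α v T S := by
  obtain ⟨a, b, hab, rfl⟩ := Finset.card_eq_two.mp hS
  have hTsum : (∑ x ∈ T, v x) = 2 := by
    have : (∑ x ∈ T, v x) = ∑ x ∈ T, (1 : ℝ) := by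
      refine Finset.sum_congr rfl fun x hx => hv1 x ?_
      rintro rfl; exact h0T hx
    rw [this, Finset.sum_const, hT]; norm_num
  intro hEFX
  rcases hEFX with h | h
  · simp at h
  · -- one of a, b is 0
    rcases Finset.mem_insert.mp h0S with h0 | h0
    · -- a = 0, take g = b
      have hb : b ∈ ({a, b} : Finset (Fin 4)) := by simp
      have := h b hb
      have he : ({a, b} : Finset (Fin 4)).erase b = {a} := by
        rw [Finset.pair_comm, Finset.erase_insert (by simpa using hab.symm)]
      rw [he, Finset.sum_singleton, ← h0, hv0, hTsum] at this
      linarith [hac ▸ this]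
    · -- b = 0, take g = a
      have h0 := Finset.mem_singleton.mp h0
      have ha : a ∈ ({a, b} : Finset (Fin 4)) := by simp
      have := h a ha
      have he : ({a, b} : Finset (Fin 4)).erase a = {b} := by
        rw [Finset.erase_insert (by simpa using hab)]
      rw [he, Finset.sum_singleton, ← h0, hv0, hTsum] at this
      linarith [hac ▸ this]

/-- Let `c = 2/α + 1` for `α ∈ (0,1]`. In the 4-good instance with `u ≡ 1`
and `v = (c,1,1,1)`, every allocation between 2 agents that is EF1 w.r.t. `u`
gives each agent exactly 2 goods, and every such allocation violates `α`-EFX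
w.r.t. `v`. -/
theorem stmt_17 (α : ℝ) (hα0 : 0 < α) (hα1 : α ≤ 1) (c : ℝ) (hc : c = 2 / α + 1)
    (u v : Fin 4 → ℝ) (hu : ∀ g, u g = 1) (hv : v = ![c, 1, 1, 1]) :
    ∀ A₁ A₂ : Finset (Fin 4), Disjoint A₁ A₂ → A₁ ∪ A₂ = Finset.univ →
      (EF1pair u A₁ A₂ ∧ EF1pair u A₂ A₁) →
      (A₁.card = 2 ∧ A₂.card = 2) ∧
      ¬ (EFXpair α v A₁ A₂ ∧ EFXpair α v A₂ A₁) := by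
  intro A₁ A₂ hdisj hunion ⟨h12, h21⟩
  have hsum : ∀ S : Finset (Fin 4), (∑ x ∈ S, u x) = S.card := by
    intro S
    rw [Finset.sum_congr rfl fun x _ => hu x, Finset.sum_const]
    simp
  have hcards : A₁.card + A₂.card = 4 := by
    rw [← Finset.card_union_of_disjoint hdisj, hunion]
    simp
  -- extract nat inequalities from EF1
  have hn12 : A₂ = ∅ ∨ A₂.card - 1 ≤ A₁.card := by
    rcases h12 with h | ⟨g, hg, hle⟩
    · exact Or.inl h
    · right
      rw [hsum, hsum, Finset.card_erase_of_mem hg] at hle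
      exact_mod_cast hle
  have hn21 : A₁ = ∅ ∨ A₁.card - 1 ≤ A₂.card := by
    rcases h21 with h | ⟨g, hg, hle⟩
    · exact Or.inl h
    · right
      rw [hsum, hsum, Finset.card_erase_of_mem hg] at hle
      exact_mod_cast hle
  have hc2 : A₁.card = 2 ∧ A₂.card = 2 := by
    rcases hn12 with h | h <;> rcases hn21 with h' | h' <;>
      simp_all [Finset.card_eq_zero] <;> omega
  refine ⟨hc2, ?_⟩
  have hac : α * c = 2 + α := by
    rw [hc]; field_simp
  have hv0 : v 0 = c := by rw [hv]; rfl
  have hv1 : ∀ x : Fin 4, x ≠ 0 → v x = 1 := by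
    intro x hx
    fin_cases x <;> simp_all [hv]
  rintro ⟨hx12, hx21⟩
  by_cases h0 : (0 : Fin 4) ∈ A₁
  · exact key_aux α c hα0 hac v hv0 hv1 A₁ A₂ hc2.1 h0
      (fun h => Finset.disjoint_left.mp hdisj h0 h) hc2.2 hx21
  · have h0' : (0 : Fin 4) ∈ A₂ := by
      have : (0 : Fin 4) ∈ A₁ ∪ A₂ := by rw [hunion]; exact mem_univ _
      rcases Finset.mem_union.mp this with h | h
      · exact absurd h h0
      · exact h
    exact key_aux α c hα0 hac v hv0 hv1 A₂ A₁ hc2.2 h0' h0 hc2.1 hx12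
end

section
/- In any fair-division instance with additive market valuation v over m goods and n agents, let M_k (for k = 1,…,⌈m/n⌉) denote the k-th block of n goods in decreasing order of market value. If an allocation A satisfies the cardinality constraints |A_i ∩ M_k| ≤ 1 for all agents i and all blocks k, then for every pair of agents i,j and every good g* there is a good g ∈ A_j such that the number of goods in A_i with market value at least v(g*) is at least the number of goods in A_j \ {g} with market value at least v(g*); in particular A is EF1 with respect to v. -/
/-!
Each value threshold `{x | v g* ≤ v x}` is a prefix `{x | π x < t}` of the ranking. Agent `i`
owns exactly one good in each of the `t / n` full blocks inside that prefix, while agent `j`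
owns at most one good in each of the `t / n + 1` blocks meeting it, one of which is its
best-ranked good; removing that good leaves `j` with at most `t / n`. For nonnegative values,
dominance at every threshold gives dominance of the sums, hence EF1.
-/

open Finset

lemma sum_le_sum_of_card_filter_le {α : Type*} [DecidableEq α] {v : α → ℝ} (hv : ∀ x, 0 ≤ v x)
    (B C : Finset α)
    (h : ∀ b ∈ B, #{x ∈ B | v b ≤ v x} ≤ #{x ∈ C | v b ≤ v x}) :
    ∑ x ∈ B, v x ≤ ∑ x ∈ C, v x := by
  induction B using Finset.strongInduction generalizing C with
  | _ B ih =>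
    rcases B.eq_empty_or_nonempty with rfl | hB
    · simpa using sum_nonneg fun x _ => hv x
    -- Match a top good `b₀` of `B` with some good `c₀` of `C` at least as valuable, then recurse.
    obtain ⟨b₀, hb₀, hb₀_max⟩ := exists_max_image B v hB
    have hb₀_pos : 0 < #{x ∈ B | v b₀ ≤ v x} := card_pos.mpr ⟨b₀, mem_filter.mpr ⟨hb₀, le_rfl⟩⟩
    obtain ⟨c₀, hc₀⟩ := card_pos.mp (hb₀_pos.trans_le (h b₀ hb₀))
    rw [mem_filter] at hc₀
    have h_erase : ∀ b ∈ B.erase b₀,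
        #{x ∈ B.erase b₀ | v b ≤ v x} ≤ #{x ∈ C.erase c₀ | v b ≤ v x} := by
      intro b hb
      have hbB := mem_of_mem_erase hb
      rw [filter_erase, filter_erase,
        card_erase_of_mem (mem_filter.mpr ⟨hb₀, hb₀_max b hbB⟩),
        card_erase_of_mem (mem_filter.mpr ⟨hc₀.1, (hb₀_max b hbB).trans hc₀.2⟩)]
      exact Nat.sub_le_sub_right (h b hbB) 1
    calc ∑ x ∈ B, v x = v b₀ + ∑ x ∈ B.erase b₀, v x := (add_sum_erase B v hb₀).symm
      _ ≤ v c₀ + ∑ x ∈ C.erase c₀, v x :=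
          add_le_add hc₀.2 (ih _ (erase_ssubset hb₀) _ h_erase)
      _ = ∑ x ∈ C, v x := add_sum_erase C v hc₀.1

section Rank

variable {M : Type*} [Fintype M] {m : ℕ} (π : M ≃ Fin m)

lemma card_filter_rank_mem {s : Finset ℕ} (hs : ∀ a ∈ s, a < m) :
    #{x | (π x : ℕ) ∈ s} = #s := by
  refine card_nbij (fun x => (π x : ℕ)) (fun x hx => by simpa using hx)
    (fun x _ y _ hxy => π.injective (Fin.val_injective hxy)) fun a ha => ?_
  refine ⟨π.symm ⟨a, hs a ha⟩, by simpa using ha, by simp⟩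

lemma card_filter_rank_lt {t : ℕ} (ht : t ≤ m) : #{x | (π x : ℕ) < t} = t := by
  simpa using card_filter_rank_mem π (s := range t) fun a ha => (mem_range.mp ha).trans_le ht

lemma card_filter_rank_div_eq {n k : ℕ} (hn : 0 < n) (hk : k * n + n ≤ m) :
    #{x | (π x : ℕ) / n = k} = n := by
  have h_block : ({x | (π x : ℕ) / n = k} : Finset M) =
      ({x | (π x : ℕ) ∈ Ico (k * n) (k * n + n)} : Finset M) := by
    ext x
    rw [mem_filter, mem_filter, Nat.div_eq_iff hn, mem_Ico, Nat.le_sub_one_iff_lt (by omega)]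
  rw [h_block, card_filter_rank_mem π fun a ha => (mem_Ico.mp ha).2.trans_le hk]
  simp

lemma exists_forall_iff_rank_lt (p : M → Prop) [DecidablePred p]
    (hp : ∀ x y, (π x : ℕ) ≤ π y → p y → p x) :
    ∃ t ≤ m, ∀ x, p x ↔ (π x : ℕ) < t := by
  refine ⟨#{x | p x}, ?_, fun x => ⟨fun hx => ?_, fun hx => ?_⟩⟩
  · exact (card_le_univ _).trans_eq ((Fintype.card_congr π).trans (Fintype.card_fin m))
  · have h : ({y | (π y : ℕ) < π x + 1} : Finset M) ⊆ ({y | p y} : Finset M) := by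
      intro y hy
      simp only [mem_filter, mem_univ, true_and] at hy ⊢
      exact hp y x (Nat.lt_succ_iff.mp hy) hx
    have := card_le_card h
    rw [card_filter_rank_lt π (π x).isLt] at this
    omega
  · by_contra hpx
    have h : ({y | p y} : Finset M) ⊆ ({y | (π y : ℕ) < π x} : Finset M) := by
      intro y hy
      simp only [mem_filter, mem_univ, true_and] at hy ⊢
      by_contra! hxy
      exact hpx (hp x y hxy hy)
    have := card_le_card h
    rw [card_filter_rank_lt π (π x).isLt.le] at this
    omega

end Rank

section Blocks

variable {M : Type*} {n : ℕ}

lemma card_filter_lt_le_div_add_one (r : M → ℕ) (B : Finset M)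
    (hB : ∀ k, #{x ∈ B | r x / n = k} ≤ 1) (t : ℕ) :
    #{x ∈ B | r x < t} ≤ t / n + 1 := by
  calc #{x ∈ B | r x < t}
      = ∑ k ∈ range (t / n + 1), #{x ∈ {x ∈ B | r x < t} | r x / n = k} :=
        card_eq_sum_card_fiberwise fun x hx =>
          mem_range.mpr (Nat.lt_succ_of_le (Nat.div_le_div_right (mem_filter.mp hx).2.le))
    _ ≤ ∑ k ∈ range (t / n + 1), 1 :=
        sum_le_sum fun k _ =>
          (card_le_card (filter_subset_filter _ (filter_subset _ _))).trans (hB k)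
    _ = t / n + 1 := by simp

lemma card_filter_erase_lt_le_div [DecidableEq M] (r : M → ℕ) (B : Finset M)
    (hB : ∀ k, #{x ∈ B | r x / n = k} ≤ 1) {g : M} (hg : g ∈ B) (hg_min : ∀ x ∈ B, r g ≤ r x)
    (t : ℕ) : #{x ∈ B.erase g | r x < t} ≤ t / n := by
  by_cases hgt : r g < t
  · rw [filter_erase, card_erase_of_mem (mem_filter.mpr ⟨hg, hgt⟩)]
    exact tsub_le_iff_right.mpr (card_filter_lt_le_div_add_one r B hB t)
  · convert Nat.zero_le _
    refine card_eq_zero.mpr (filter_eq_empty_iff.mpr fun x hx => ?_)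
    exact fun hxt => hgt ((hg_min x (mem_of_mem_erase hx)).trans_lt hxt)

end Blocks

section Allocation

variable {M : Type*} [Fintype M] {m n : ℕ} (π : M ≃ Fin m) (A : Fin n → Finset M)

lemma card_filter_eq_sum_card_filter (hA : ∀ x, ∃! i, x ∈ A i) (p : M → Prop) [DecidablePred p] :
    #{x | p x} = ∑ i, #{x ∈ A i | p x} := by
  classical
  have h_cover : ({x | p x} : Finset M) = univ.biUnion fun i => {x ∈ A i | p x} := by
    ext x
    obtain ⟨i, hi, -⟩ := hA x
    simpa using fun _ => ⟨i, hi⟩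
  rw [h_cover, card_biUnion fun i _ j _ hij => disjoint_filter_filter <| disjoint_left.mpr
    fun x hxi hxj => hij ((hA x).unique hxi hxj)]

lemma card_filter_rank_div_eq_one (hA : ∀ x, ∃! i, x ∈ A i)
    (hblock : ∀ i k, #{x ∈ A i | (π x : ℕ) / n = k} ≤ 1) (i : Fin n) {k : ℕ}
    (hk : k * n + n ≤ m) : #{x ∈ A i | (π x : ℕ) / n = k} = 1 := by
  have h_sum := card_filter_eq_sum_card_filter A hA fun x => (π x : ℕ) / n = k
  rw [card_filter_rank_div_eq π i.pos hk, ← add_sum_erase _ _ (mem_univ i)] at h_sum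
  have h_rest : ∑ j ∈ univ.erase i, #{x ∈ A j | (π x : ℕ) / n = k} ≤ n - 1 := by
    simpa using sum_le_card_nsmul (univ.erase i) _ 1 fun j _ => hblock j k
  have := hblock i k
  have := i.pos
  omega

lemma div_le_card_filter_rank_lt (hA : ∀ x, ∃! i, x ∈ A i)
    (hblock : ∀ i k, #{x ∈ A i | (π x : ℕ) / n = k} ≤ 1) (i : Fin n) {t : ℕ} (ht : t ≤ m) :
    t / n ≤ #{x ∈ A i | (π x : ℕ) < t} := by
  calc t / n
      = ∑ k ∈ range (t / n), #{x ∈ A i | (π x : ℕ) / n = k} := by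
        rw [sum_eq_card_nsmul fun k hk => card_filter_rank_div_eq_one π A hA hblock i ?_]
        · simp
        calc k * n + n = (k + 1) * n := by ring
          _ ≤ t / n * n := Nat.mul_le_mul_right n (mem_range.mp hk)
          _ ≤ m := (Nat.div_mul_le_self t n).trans ht
    _ = #{x ∈ A i | (π x : ℕ) / n < t / n} := by
        rw [card_eq_sum_card_fiberwise (f := fun x => (π x : ℕ) / n) (t := range (t / n))
          fun x hx => mem_range.mpr (mem_filter.mp hx).2]
        refine sum_congr rfl fun k hk => ?_
        simp only [filter_filter]
        exact congrArg card (filter_congr fun x _ =>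
          ⟨fun h => ⟨h ▸ mem_range.mp hk, h⟩, And.right⟩)
    _ ≤ #{x ∈ A i | (π x : ℕ) < t} :=
        card_le_card (monotone_filter_right _ fun _ _ => Nat.lt_of_div_lt_div)

end Allocation

theorem stmt_18_general {n m : ℕ} {M : Type*} [Fintype M] [DecidableEq M]
    (π : M ≃ Fin m) (v : M → ℝ) (hvnn : ∀ g, 0 ≤ v g)
    (hcons : ∀ g g' : M, (π g : ℕ) ≤ (π g' : ℕ) → v g' ≤ v g)
    (A : Fin n → Finset M) (hpart : ∀ g : M, ∃! i, g ∈ A i)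
    (hblock : ∀ i k, ((A i).filter (fun g => (π g : ℕ) / n = k)).card ≤ 1) :
    ∀ i j, A j = ∅ ∨
      ((∀ gstar : M, ∃ g ∈ A j,
          (((A j).erase g).filter (fun x => v gstar ≤ v x)).card ≤
            ((A i).filter (fun x => v gstar ≤ v x)).card) ∧
        ∃ g ∈ A j, (∑ x ∈ (A j).erase g, v x) ≤ ∑ x ∈ A i, v x) := by
  intro i j
  rcases (A j).eq_empty_or_nonempty with hAj | hAj
  · exact Or.inl hAj
  obtain ⟨g, hg, hg_min⟩ := exists_min_image (A j) (fun x => (π x : ℕ)) hAj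
  have h_sd : ∀ c : M, #{x ∈ (A j).erase g | v c ≤ v x} ≤ #{x ∈ A i | v c ≤ v x} := by
    intro c
    obtain ⟨t, ht, h_prefix⟩ := exists_forall_iff_rank_lt π (fun x => v c ≤ v x)
      fun x y hxy hy => hy.trans (hcons x y hxy)
    simp only [h_prefix]
    exact (card_filter_erase_lt_le_div _ _ (hblock j) hg hg_min t).trans
      (div_le_card_filter_rank_lt π A hpart hblock i ht)
  exact Or.inr ⟨fun c => ⟨g, hg, h_sd c⟩, g, hg,
    sum_le_sum_of_card_filter_le hvnn _ _ fun c _ => h_sd c⟩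

/-- If an allocation satisfies the block cardinality constraints induced by
the market ranking (at most one good per agent from each consecutive block of
`n` goods ranked by decreasing market value), then it is SD-dominant up to
one good w.r.t. the market valuation at every value threshold; in particular
it is EF1 w.r.t. the market valuation. -/
theorem stmt_18 {n m : ℕ} (hn : 0 < n) {M : Type*} [Fintype M] [DecidableEq M]
    (π : M ≃ Fin m) (v : M → ℝ) (hvnn : ∀ g, 0 ≤ v g)
    (hcons : ∀ g g' : M, (π g : ℕ) ≤ (π g' : ℕ) → v g' ≤ v g)
    (A : Fin n → Finset M) (hpart : ∀ g : M, ∃! i, g ∈ A i)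
    (hblock : ∀ i k, ((A i).filter (fun g => (π g : ℕ) / n = k)).card ≤ 1) :
    ∀ i j, A j = ∅ ∨
      ((∀ gstar : M, ∃ g ∈ A j,
          (((A j).erase g).filter (fun x => v gstar ≤ v x)).card ≤
            ((A i).filter (fun x => v gstar ≤ v x)).card) ∧
        ∃ g ∈ A j, (∑ x ∈ (A j).erase g, v x) ≤ ∑ x ∈ A i, v x) :=
  stmt_18_general π v hvnn hcons A hpart hblock
end
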